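/- arXiv:1103.5873 — 4 statements merged into one kernel-verified Lean document; each statement's English description precedes it below -/
import Mathlib

section
/- Let the setting be type A_N or type B_N and let T ≥ 1. The map sending a snake (i_t,k_t), 1 ≤ t ≤ T, with all elements in X′, to the set D = {(s,t) ∈ ℤ×ℤ : 1 ≤ t ≤ T, t − k_t/(2r^∨) − (i_t−1)/2 ≤ s ≤ t − k_t/(2r^∨) + (i_t−1)/2} is a bijection from the set of snakes of length T with elements in X′ onto the set of skew diagrams whose non-empty columns are exactly 1, 2, …, T and none of whose columns contains more than N boxes in type A, respectively more than N−1 boxes in type B. -/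
namespace Paper

/-- The ambient setting: type `A N` (with `N ≥ 1`) or type `B N ε`
(with `N ≥ 2` and `0 < ε < 1/2`). -/
inductive Setting where
  | A (N : ℕ)
  | B (N : ℕ) (ε : ℝ)

namespace Setting

/-- The rank `N`. -/
def N : Setting → ℕ
  | A n => n
  | B n _ => n

/-- Validity of the parameters of the setting. -/
def valid : Setting → Prop
  | A n => 1 ≤ n
  | B n ε => 2 ≤ n ∧ 0 < ε ∧ ε < 1 / 2

end Setting

/-- The numbers `r_i` : in type A all equal `1`; in type B, `r_N = 1` and `r_i = 2` for `i < N`. -/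
def rr : Setting → ℕ → ℕ
  | .A _, _ => 1
  | .B n _, j => if j = n then 1 else 2

/-- The set `X` in type `A_N`. -/
def XA (n : ℕ) : Set (ℕ × ℤ) :=
  {ik | 1 ≤ ik.1 ∧ ik.1 ≤ n ∧ ((ik.1 : ℤ) - ik.2) % 2 = 1}

/-- The set `X` in type `B_N`. -/
def XB (n : ℕ) : Set (ℕ × ℤ) :=
  {ik | (ik.1 = n ∧ ik.2 % 2 = 1) ∨ (1 ≤ ik.1 ∧ ik.1 < n ∧ ik.2 % 2 = 0)}

/-- The set `X ⊆ I × ℤ`. -/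
def X : Setting → Set (ℕ × ℤ)
  | .A n => XA n
  | .B n _ => XB n

/-- The set `W = {(i,k) : (i, k - r_i) ∈ X}`. -/
def W (S : Setting) : Set (ℕ × ℤ) :=
  {ik | (ik.1, ik.2 - (rr S ik.1 : ℤ)) ∈ X S}

/-- The `r`-th point of a path (a finite list of points of the plane). -/
def pt (p : List (ℝ × ℝ)) (r : ℕ) : ℝ × ℝ := p.getD r (0, 0)

/-- The set of paths `𝒫_{i,k}` in type `A_N`. -/
def pathsA (n : ℕ) (i : ℕ) (k : ℤ) : Set (List (ℝ × ℝ)) :=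
  {p | p.length = n + 2 ∧
    (∀ r, r < n + 2 → (pt p r).1 = (r : ℝ)) ∧
    (pt p 0).2 = (i : ℝ) + (k : ℝ) ∧
    (pt p (n + 1)).2 = (n : ℝ) + 1 - (i : ℝ) + (k : ℝ) ∧
    (∀ r, r ≤ n → (pt p (r + 1)).2 - (pt p r).2 = 1 ∨ (pt p (r + 1)).2 - (pt p r).2 = -1)}

/-- The set of paths `𝒫_{N,ℓ}` in type `B_N`. -/
def pathsBspin (n : ℕ) (ε : ℝ) (l : ℤ) : Set (List (ℝ × ℝ)) :=
  {p | p.length = n + 1 ∧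
    (if l % 4 = 3 then ∀ r, r < n → (pt p r).1 = 2 * (r : ℝ)
     else ∀ r, r < n → (pt p r).1 = 4 * (n : ℝ) - 2 - 2 * (r : ℝ)) ∧
    (pt p n).1 = 2 * (n : ℝ) - 1 ∧
    (pt p 0).2 = (l : ℝ) + 2 * (n : ℝ) - 1 ∧
    (∀ r, r + 2 ≤ n → (pt p (r + 1)).2 - (pt p r).2 = 2 ∨ (pt p (r + 1)).2 - (pt p r).2 = -2) ∧
    ((pt p n).2 - (pt p (n - 1)).2 = 1 + ε ∨ (pt p n).2 - (pt p (n - 1)).2 = -(1 + ε))}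

/-- The set of paths `𝒫_{i,k}` in type `B_N`. -/
def pathsB (n : ℕ) (ε : ℝ) (i : ℕ) (k : ℤ) : Set (List (ℝ × ℝ)) :=
  if i = n then pathsBspin n ε k
  else {p | ∃ a b : List (ℝ × ℝ),
    a ∈ pathsBspin n ε (k - (2 * (n : ℤ) - 2 * (i : ℤ) - 1)) ∧
    b ∈ pathsBspin n ε (k + (2 * (n : ℤ) - 2 * (i : ℤ) - 1)) ∧
    p = a ++ b.reverse ∧
    (pt a n).1 = (pt b n).1 ∧ 0 < (pt a n).2 - (pt b n).2}

/-- The set of paths `𝒫_{i,k}`. -/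
def P : Setting → ℕ → ℤ → Set (List (ℝ × ℝ))
  | .A n => pathsA n
  | .B n ε => pathsB n ε

/-- The map `ι : X → ℤ × ℤ` of type `B_N`. -/
def iotaB (n : ℕ) (ik : ℕ × ℤ) : ℤ × ℤ :=
  if ik.1 = n then (2 * (n : ℤ) - 1, ik.2)
  else if (2 * (n : ℤ) + ik.2 - 2 * (ik.1 : ℤ)) % 4 = 2 then (2 * (ik.1 : ℤ), ik.2)
  else (4 * (n : ℤ) - 2 - 2 * (ik.1 : ℤ), ik.2)

/-- The corners of a path: `Cp S p true` is the set `C_{p,+}` of upper corners, and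
`Cp S p false` is the set `C_{p,-}` of lower corners. -/
def Cp (S : Setting) (p : List (ℝ × ℝ)) (up : Bool) : Set (ℕ × ℤ) :=
  match S with
  | .A n =>
    {jl | 1 ≤ jl.1 ∧ jl.1 ≤ n ∧
      pt p jl.1 = ((jl.1 : ℝ), (jl.2 : ℝ)) ∧
      (pt p (jl.1 - 1)).2 = (jl.2 : ℝ) + (if up then 1 else -1) ∧
      (pt p (jl.1 + 1)).2 = (jl.2 : ℝ) + (if up then 1 else -1)}
  | .B n ε =>
    {jl | jl ∈ XB n ∧
      ((∃ r : ℕ, 1 ≤ r ∧ r + 1 < p.length ∧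
          pt p r = (((iotaB n jl).1 : ℝ), ((iotaB n jl).2 : ℝ)) ∧
          (iotaB n jl).1 ≠ 0 ∧ (iotaB n jl).1 ≠ 2 * (n : ℤ) - 1 ∧
          (iotaB n jl).1 ≠ 4 * (n : ℤ) - 2 ∧
          (if up then (pt p r).2 < (pt p (r - 1)).2 ∧ (pt p r).2 < (pt p (r + 1)).2
           else (pt p (r - 1)).2 < (pt p r).2 ∧ (pt p (r + 1)).2 < (pt p r).2))
       ∨ (jl.1 = n ∧
          (if up then (2 * (n : ℝ) - 1, (jl.2 : ℝ) - ε) ∈ p ∧ (2 * (n : ℝ) - 1, (jl.2 : ℝ) + ε) ∉ p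
           else (2 * (n : ℝ) - 1, (jl.2 : ℝ) + ε) ∈ p ∧ (2 * (n : ℝ) - 1, (jl.2 : ℝ) - ε) ∉ p)))}

/-- `p'` is obtained from `p` by replacing the point `q` by the point `q'`. -/
def Replace1 (p p' : List (ℝ × ℝ)) (q q' : ℝ × ℝ) : Prop :=
  ∃ r : ℕ, r < p.length ∧ pt p r = q ∧ p'.length = p.length ∧ pt p' r = q' ∧
    ∀ s, s < p.length → s ≠ r → pt p' s = pt p s

/-- `p'` is obtained from `p` by replacing the point `q1` by `q1'` and the point `q2` by `q2'`. -/
def Replace2 (p p' : List (ℝ × ℝ)) (q1 q1' q2 q2' : ℝ × ℝ) : Prop :=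
  ∃ r s : ℕ, r < p.length ∧ s < p.length ∧ r ≠ s ∧ pt p r = q1 ∧ pt p s = q2 ∧
    p'.length = p.length ∧ pt p' r = q1' ∧ pt p' s = q2' ∧
    ∀ u, u < p.length → u ≠ r → u ≠ s → pt p' u = pt p u

/-- The path `p` can be lowered at `(j, l)`: `(j, l - r_j) ∈ C_{p,+}` and
`(j, l + r_j) ∉ C_{p,+}`. -/
def CanLower (S : Setting) (p : List (ℝ × ℝ)) (j : ℕ) (l : ℤ) : Prop :=
  (j, l - (rr S j : ℤ)) ∈ Cp S p true ∧ (j, l + (rr S j : ℤ)) ∉ Cp S p true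

/-- `p'` is the result of the lowering move at `(j,l)` applied to the path `p ∈ 𝒫_{i,k}`;
written `p' = p 𝒜_{j,l}⁻¹`. -/
def LoweredTo (S : Setting) (i : ℕ) (k : ℤ) (j : ℕ) (l : ℤ)
    (p p' : List (ℝ × ℝ)) : Prop :=
  p ∈ P S i k ∧ p' ∈ P S i k ∧ CanLower S p j l ∧
  (match S with
   | .A _ => Replace1 p p' ((j : ℝ), (l : ℝ) - 1) ((j : ℝ), (l : ℝ) + 1)
   | .B n ε =>
     if j = n then
       Replace1 p p' (2 * (n : ℝ) - 1, (l : ℝ) - 1 - ε) (2 * (n : ℝ) - 1, (l : ℝ) + 1 + ε)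
     else if j = n - 1 then
       Replace2 p p'
         (((iotaB n (j, l - 2)).1 : ℝ), (l : ℝ) - 2) (((iotaB n (j, l - 2)).1 : ℝ), (l : ℝ) + 2)
         (2 * (n : ℝ) - 1, (l : ℝ) - 1 + ε) (2 * (n : ℝ) - 1, (l : ℝ) + 1 - ε)
     else
       Replace1 p p'
         (((iotaB n (j, l - 2)).1 : ℝ), (l : ℝ) - 2) (((iotaB n (j, l - 2)).1 : ℝ), (l : ℝ) + 2))

/-- The path `p` can be raised at `(j,l)`: it is of the form `p' 𝒜_{j,l}⁻¹`. -/
def CanRaise (S : Setting) (i : ℕ) (k : ℤ) (p : List (ℝ × ℝ)) (j : ℕ) (l : ℤ) : Prop :=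
  ∃ p', LoweredTo S i k j l p' p

/-- The monomial group `ℳ`, realised as exponent functions: the free abelian group on the
symbols `Y_{i,k}`, `(i,k) ∈ X`, is identified with finitely supported functions `(ℕ × ℤ) → ℤ`,
written additively. -/
def Y (x : ℕ × ℤ) : (ℕ × ℤ) → ℤ := fun z => if z = x then 1 else 0

noncomputable def ind (s : Prop) : ℤ := @ite ℤ s (Classical.propDecidable s) 1 0

/-- The monomial `m(p)` of a path: `∏ Y_{j,l}` over upper corners times `∏ Y_{j,l}⁻¹`
over lower corners. -/
noncomputable def mon (S : Setting) (p : List (ℝ × ℝ)) : (ℕ × ℤ) → ℤ :=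
  fun x => ind (x ∈ Cp S p true) - ind (x ∈ Cp S p false)

/-- The monomials `A_{j,l}`, with the conventions `Y_{0,·} = Y_{N+1,·} = 1`. -/
def Amon (S : Setting) (j : ℕ) (l : ℤ) : (ℕ × ℤ) → ℤ :=
  match S with
  | .A n =>
      Y (j, l + 1) + Y (j, l - 1) - (if j = 1 then 0 else Y (j - 1, l))
        - (if j = n then 0 else Y (j + 1, l))
  | .B n _ =>
      if j = n then Y (n, l + 1) + Y (n, l - 1) - Y (n - 1, l)
      else if j = n - 1 then
        Y (n - 1, l + 2) + Y (n - 1, l - 2) - (if j = 1 then 0 else Y (n - 2, l))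
          - Y (n, l + 1) - Y (n, l - 1)
      else
        Y (j, l + 2) + Y (j, l - 2) - (if j = 1 then 0 else Y (j - 1, l)) - Y (j + 1, l)

/-- A monomial is dominant iff all its exponents are nonnegative. -/
def Dominant (m : (ℕ × ℤ) → ℤ) : Prop := ∀ x, 0 ≤ m x

/-- A monomial is anti-dominant iff all its exponents are nonpositive. -/
def AntiDominant (m : (ℕ × ℤ) → ℤ) : Prop := ∀ x, m x ≤ 0

/-- `(i',k')` is in snake position with respect to `(i,k)`. -/
def SnakePos : Setting → ℕ × ℤ → ℕ × ℤ → Prop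
  | .A _, ik, ik' => |(ik'.1 : ℤ) - (ik.1 : ℤ)| + 2 ≤ ik'.2 - ik.2
  | .B n _, ik, ik' =>
      if ik.1 = n ∧ ik'.1 = n then
        2 ≤ ik'.2 - ik.2 ∧ (ik'.2 - ik.2) % 4 = 2
      else if ik.1 = n ∨ ik'.1 = n then
        2 * |(ik'.1 : ℤ) - (ik.1 : ℤ)| + 3 ≤ ik'.2 - ik.2 ∧
          (ik'.2 - ik.2) % 4 = (2 * |(ik'.1 : ℤ) - (ik.1 : ℤ)| - 1) % 4
      else
        2 * |(ik'.1 : ℤ) - (ik.1 : ℤ)| + 4 ≤ ik'.2 - ik.2 ∧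
          (ik'.2 - ik.2) % 4 = (2 * |(ik'.1 : ℤ) - (ik.1 : ℤ)|) % 4

/-- A snake: a sequence of points of `X`, each in snake position w.r.t. the previous one. -/
def IsSnake (S : Setting) {T : ℕ} (w : Fin T → ℕ × ℤ) : Prop :=
  (∀ t, w t ∈ X S) ∧
  ∀ (t : Fin T) (h : (t : ℕ) + 1 < T), SnakePos S (w t) (w ⟨(t : ℕ) + 1, h⟩)

/-- `p` is strictly above `p'`. -/
def StrictlyAbove (p p' : List (ℝ × ℝ)) : Prop :=
  ∀ a ∈ p, ∀ b ∈ p', a.1 = b.1 → a.2 < b.2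

/-- A tuple of paths is non-overlapping. -/
def NonOverlapping {T : ℕ} (ps : Fin T → List (ℝ × ℝ)) : Prop :=
  ∀ s t : Fin T, s < t → StrictlyAbove (ps s) (ps t)

/-- The set `𝒫̄` of non-overlapping tuples of paths attached to a snake. -/
def PBar (S : Setting) {T : ℕ} (w : Fin T → ℕ × ℤ) : Set (Fin T → List (ℝ × ℝ)) :=
  {ps | (∀ t, ps t ∈ P S (w t).1 (w t).2) ∧ NonOverlapping ps}

/-- The product `∏_t m(p_t)` of the monomials of a tuple of paths. -/
noncomputable def tmon (S : Setting) {T : ℕ} (ps : Fin T → List (ℝ × ℝ)) : (ℕ × ℤ) → ℤ :=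
  ∑ t, mon S (ps t)

/-- Lowering move at `jl` on a tuple of paths: one component is lowered, the others
are unchanged. -/
def TLoweredTo (S : Setting) {T : ℕ} (w : Fin T → ℕ × ℤ) (jl : ℕ × ℤ)
    (ps ps' : Fin T → List (ℝ × ℝ)) : Prop :=
  ∃ t, LoweredTo S (w t).1 (w t).2 jl.1 jl.2 (ps t) (ps' t) ∧ ∀ s, s ≠ t → ps' s = ps s

/-- Sequences of raising/lowering moves on a single path; the list records, for each move,
whether it was a lowering move (`true`) or a raising move (`false`), and its site. -/
inductive MoveSeq (S : Setting) (i : ℕ) (k : ℤ) :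
    List (ℝ × ℝ) → List (ℝ × ℝ) → List (Bool × (ℕ × ℤ)) → Prop where
  | nil (p : List (ℝ × ℝ)) : MoveSeq S i k p p []
  | lower {p q r : List (ℝ × ℝ)} {jl : ℕ × ℤ} {ms : List (Bool × (ℕ × ℤ))} :
      jl ∈ W S → LoweredTo S i k jl.1 jl.2 p q → MoveSeq S i k q r ms →
      MoveSeq S i k p r ((true, jl) :: ms)
  | raise {p q r : List (ℝ × ℝ)} {jl : ℕ × ℤ} {ms : List (Bool × (ℕ × ℤ))} :
      jl ∈ W S → LoweredTo S i k jl.1 jl.2 q p → MoveSeq S i k q r ms →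
      MoveSeq S i k p r ((false, jl) :: ms)

/-- Sequences of raising/lowering moves on tuples of paths, all of whose intermediate
tuples are non-overlapping. -/
inductive TMoveSeq (S : Setting) {T : ℕ} (w : Fin T → ℕ × ℤ) :
    (Fin T → List (ℝ × ℝ)) → (Fin T → List (ℝ × ℝ)) → List (Bool × (ℕ × ℤ)) → Prop where
  | nil (ps : Fin T → List (ℝ × ℝ)) : TMoveSeq S w ps ps []
  | lower {ps qs rs : Fin T → List (ℝ × ℝ)} {jl : ℕ × ℤ} {ms : List (Bool × (ℕ × ℤ))} :
      jl ∈ W S → TLoweredTo S w jl ps qs → NonOverlapping qs →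
      TMoveSeq S w qs rs ms → TMoveSeq S w ps rs ((true, jl) :: ms)
  | raise {ps qs rs : Fin T → List (ℝ × ℝ)} {jl : ℕ × ℤ} {ms : List (Bool × (ℕ × ℤ))} :
      jl ∈ W S → TLoweredTo S w jl qs ps → NonOverlapping qs →
      TMoveSeq S w qs rs ms → TMoveSeq S w ps rs ((false, jl) :: ms)

/-- Sequences of lowering moves on tuples of paths, all of whose intermediate tuples
are non-overlapping; the list records the sites, in order. -/
inductive TLowerSeq (S : Setting) {T : ℕ} (w : Fin T → ℕ × ℤ) :
    (Fin T → List (ℝ × ℝ)) → (Fin T → List (ℝ × ℝ)) → List (ℕ × ℤ) → Prop where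
  | nil (ps : Fin T → List (ℝ × ℝ)) : TLowerSeq S w ps ps []
  | cons {ps qs rs : Fin T → List (ℝ × ℝ)} {jl : ℕ × ℤ} {ms : List (ℕ × ℤ)} :
      jl ∈ W S → TLoweredTo S w jl ps qs → NonOverlapping qs →
      TLowerSeq S w qs rs ms → TLowerSeq S w ps rs (jl :: ms)

/-- Weak order on paths with the same x-coordinates: `p` is weakly above `p'`. -/
def WeaklyAbove (p p' : List (ℝ × ℝ)) : Prop :=
  p.length = p'.length ∧ ∀ r, r < p.length → (pt p r).2 ≤ (pt p' r).2

/-- `p` is weakly below `p'`. -/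
def WeaklyBelow (p p' : List (ℝ × ℝ)) : Prop :=
  p.length = p'.length ∧ ∀ r, r < p.length → (pt p' r).2 ≤ (pt p r).2

/-- The path `top(p, p')`. -/
def topPath (p p' : List (ℝ × ℝ)) : List (ℝ × ℝ) :=
  List.zipWith (fun a b => (a.1, min a.2 b.2)) p p'

/-- The distinguished point contained in the highest path `p⁺_{i,k}`. -/
def highPoint : Setting → ℕ → ℤ → ℝ × ℝ
  | .A _, i, k => ((i : ℝ), (k : ℝ))
  | .B n ε, i, k =>
      if i = n then (2 * (n : ℝ) - 1, (k : ℝ) - ε)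
      else (((iotaB n (i, k)).1 : ℝ), ((iotaB n (i, k)).2 : ℝ))

/-- The distinguished point contained in the lowest path `p⁻_{i,k}`. -/
def lowPoint : Setting → ℕ → ℤ → ℝ × ℝ
  | .A n, i, k => ((n : ℝ) + 1 - (i : ℝ), (k : ℝ) + (n : ℝ) + 1)
  | .B n ε, i, k =>
      if i = n then (2 * (n : ℝ) - 1, (k : ℝ) + 4 * (n : ℝ) - 2 + ε)
      else (((iotaB n (i, k + 4 * (n : ℤ) - 2)).1 : ℝ),
            ((iotaB n (i, k + 4 * (n : ℤ) - 2)).2 : ℝ))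

/-- The highest path `p⁺_{i,k}` : the path of `𝒫_{i,k}` with no lower corners. -/
noncomputable def highestPath (S : Setting) (i : ℕ) (k : ℤ) : List (ℝ × ℝ) :=
  Classical.epsilon fun p => p ∈ P S i k ∧ Cp S p false = ∅

/-- The lowest path `p⁻_{i,k}` : the path of `𝒫_{i,k}` with no upper corners. -/
noncomputable def lowestPath (S : Setting) (i : ℕ) (k : ℤ) : List (ℝ × ℝ) :=
  Classical.epsilon fun p => p ∈ P S i k ∧ Cp S p true = ∅




/-- `r^∨`: `1` in type A, `2` in type B. -/
def rd : Setting → ℤ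
  | .A _ => 1
  | .B _ _ => 2

/-- The subset `X' ⊆ X`: all of `X` in type A; in type B, the points `(i,k)` with
`i < N` and `2i - k ≡ 2 (mod 4)`. -/
def Xp : Setting → Set (ℕ × ℤ)
  | .A n => XA n
  | .B n _ => {ik | ik ∈ XB n ∧ ik.1 < n ∧ (2 * (ik.1 : ℤ) - ik.2) % 4 = 2}

/-- A skew diagram: a finite subset of `ℤ × ℤ_{>0}` such that (1) if nonempty it has a box
in column 1, and (2) if `(i,j)` is not a box then either nothing weakly to its lower-right
is a box, or nothing weakly to its upper-left is a box. -/
def IsSkewDiagram (D : Set (ℤ × ℤ)) : Prop :=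
  D.Finite ∧ (∀ q ∈ D, 0 < q.2) ∧
  (D.Nonempty → ∃ i : ℤ, (i, 1) ∈ D) ∧
  (∀ i j : ℤ, 0 < j → (i, j) ∉ D →
    (∀ i' j' : ℤ, i ≤ i' → j ≤ j' → (i', j') ∉ D) ∨
    (∀ i' j' : ℤ, i' ≤ i → j' ≤ j → (i', j') ∉ D))

/-- The skew diagram attached to a snake `(i_t, k_t)`, `1 ≤ t ≤ T` (here indexed by `Fin T`):
the boxes `(s,t)` with `1 ≤ t ≤ T` and
`t - k_t/(2 r^∨) - (i_t - 1)/2 ≤ s ≤ t - k_t/(2 r^∨) + (i_t - 1)/2`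
(the inequalities are stated multiplied through by `2 r^∨ > 0`). -/
def diagOf (S : Setting) {T : ℕ} (w : Fin T → ℕ × ℤ) : Set (ℤ × ℤ) :=
  {q | ∃ t : Fin T, q.2 = (t : ℤ) + 1 ∧
    2 * rd S * ((t : ℤ) + 1) - (w t).2 - rd S * (((w t).1 : ℤ) - 1) ≤ 2 * rd S * q.1 ∧
    2 * rd S * q.1 ≤ 2 * rd S * ((t : ℤ) + 1) - (w t).2 + rd S * (((w t).1 : ℤ) - 1)}

/-- The maximal number of boxes allowed in a column: `N` in type A, `N - 1` in type B. -/
def colBound : Setting → ℕ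
  | .A n => n
  | .B n _ => n - 1

/-- Type A skew tableaux of shape `D` (encoded as functions `ℤ × ℤ → ℕ` vanishing off `D`):
entries in the alphabet `{1, …, N+1}`, weakly increasing along rows, strictly increasing
down columns. -/
def TabA (n : ℕ) (D : Set (ℤ × ℤ)) : Set (ℤ × ℤ → ℕ) :=
  {f | (∀ q ∈ D, 1 ≤ f q ∧ f q ≤ n + 1) ∧ (∀ q ∉ D, f q = 0) ∧
    (∀ i j : ℤ, (i, j) ∈ D → (i, j + 1) ∈ D → f (i, j) ≤ f (i, j + 1)) ∧
    (∀ i j : ℤ, (i, j) ∈ D → (i + 1, j) ∈ D → f (i, j) < f (i + 1, j))}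

/-- The type A box monomial `⟦a⟧_k = Y_{a-1, a+k}⁻¹ Y_{a, a-1+k}`, with the conventions
`Y_{0,·} = Y_{N+1,·} = 1`. -/
def boxA (n : ℕ) (a : ℕ) (k : ℤ) : (ℕ × ℤ) → ℤ :=
  (if a = n + 1 then 0 else Y (a, (a : ℤ) - 1 + k)) -
    (if a = 1 then 0 else Y (a - 1, (a : ℤ) + k))

/-- The monomial `M(𝒯)` of a type A skew tableau. -/
noncomputable def MtabA (n : ℕ) (D : Set (ℤ × ℤ)) (f : ℤ × ℤ → ℕ) : (ℕ × ℤ) → ℤ :=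
  ∑ᶠ q ∈ D, boxA n (f q) (2 * (q.2 - q.1))

/-- The type B alphabet `{1, …, N, 0, N̄, …, 1̄}`, encoded in `ℤ` with the barred letter
`ā` encoded as `-a`. -/
def alphabetB (n : ℕ) : Set ℤ :=
  {a | (1 ≤ a ∧ a ≤ (n : ℤ)) ∨ a = 0 ∨ (-(n : ℤ) ≤ a ∧ a ≤ -1)}

/-- The position of a type B letter in the alphabetical order
`1 < 2 < ⋯ < N < 0 < N̄ < ⋯ < 2̄ < 1̄`. -/
def ordB (n : ℕ) (a : ℤ) : ℤ :=
  if 1 ≤ a then a else if a = 0 then (n : ℤ) + 1 else 2 * (n : ℤ) + 2 + a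

/-- Type B skew tableaux of shape `D` (encoded as functions `ℤ × ℤ → ℤ` vanishing off `D`). -/
def TabB (n : ℕ) (D : Set (ℤ × ℤ)) : Set (ℤ × ℤ → ℤ) :=
  {f | (∀ q ∈ D, f q ∈ alphabetB n) ∧ (∀ q ∉ D, f q = 0) ∧
    (∀ i j : ℤ, (i, j) ∈ D → (i, j + 1) ∈ D →
      ordB n (f (i, j)) ≤ ordB n (f (i, j + 1)) ∧ ¬(f (i, j) = 0 ∧ f (i, j + 1) = 0)) ∧
    (∀ i j : ℤ, (i, j) ∈ D → (i + 1, j) ∈ D →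
      ordB n (f (i, j)) < ordB n (f (i + 1, j)) ∨ (f (i, j) = 0 ∧ f (i + 1, j) = 0))}

/-- The type B box monomials `⟦a⟧_k`, with the convention `Y_{0,·} = 1`. -/
def boxB (n : ℕ) (a : ℤ) (k : ℤ) : (ℕ × ℤ) → ℤ :=
  if a = 0 then Y (n, 2 * (n : ℤ) - 3 + k) - Y (n, 2 * (n : ℤ) + 1 + k)
  else if a = (n : ℤ) then
    Y (n, 2 * (n : ℤ) - 3 + k) + Y (n, 2 * (n : ℤ) - 1 + k) - Y (n - 1, 2 * (n : ℤ) + k)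
  else if a = -(n : ℤ) then
    Y (n - 1, 2 * (n : ℤ) - 2 + k) - Y (n, 2 * (n : ℤ) - 1 + k) - Y (n, 2 * (n : ℤ) + 1 + k)
  else if 1 ≤ a then
    Y (a.toNat, 2 * a - 2 + k) - (if a = 1 then 0 else Y (a.toNat - 1, 2 * a + k))
  else
    (if a = -1 then 0 else Y ((-a).toNat - 1, 4 * (n : ℤ) - 2 - 2 * (-a) + k)) -
      Y ((-a).toNat, 4 * (n : ℤ) - 2 * (-a) + k)

/-- The monomial `M(𝒯)` of a type B skew tableau. -/
noncomputable def MtabB (n : ℕ) (D : Set (ℤ × ℤ)) (f : ℤ × ℤ → ℤ) : (ℕ × ℤ) → ℤ :=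
  ∑ᶠ q ∈ D, boxB n (f q) (4 * (q.2 - q.1))

/-!
A point `(i, k)` of `X'` sitting in column `j` of the diagram contributes the row interval
`[a, b]` with `b - a + 1 = i` and `2 r^∨ (j - a) = k + r^∨ (i - 1)`, so points of `X'` in a fixed
column are the same as nonempty intervals of length at most `N` (type A), resp. `N - 1`
(type B). In these coordinates the snake-position condition between consecutive points
reduces to `a' ≤ a ∧ b' ≤ b`: a snake in `X'` is an antitone sequence of intervals. On the
diagram side, the skew condition makes every nonempty column an interval and forces its two
endpoints to decrease weakly from one column to the next, so the skew diagrams in question are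
exactly the unions of the columns of such an antitone sequence of intervals.
-/

theorem _root_.Set.bijOn_image_of_eqOn {α β γ : Type*} {f : α → β} {g : β → γ} {h : α → γ}
    {s : Set α} (hh : Set.InjOn h s) (hgf : Set.EqOn (g ∘ f) h s) :
    Set.BijOn g (f '' s) (h '' s) := by
  refine ⟨?_, ?_, ?_⟩
  · rintro _ ⟨a, ha, rfl⟩
    exact ⟨a, ha, (hgf ha).symm⟩
  · rintro _ ⟨a, ha, rfl⟩ _ ⟨b, hb, rfl⟩ hab
    rw [hh ha hb ((hgf ha).symm.trans (hab.trans (hgf hb)))]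
  · rintro _ ⟨a, ha, rfl⟩
    exact ⟨f a, Set.mem_image_of_mem f ha, hgf ha⟩

theorem _root_.Fin.antitone_iff_forall_succ_le {α : Type*} [Preorder α] {T : ℕ} {f : Fin T → α} :
    Antitone f ↔ ∀ (t : Fin T) (h : (t : ℕ) + 1 < T), f ⟨(t : ℕ) + 1, h⟩ ≤ f t := by
  simp only [antitone_iff_forall_covBy, Fin.covBy_iff, Nat.covBy_iff_add_one_eq]
  refine ⟨fun hf t h => hf _ _ rfl, ?_⟩
  rintro hf s ⟨t, ht⟩ rfl
  exact hf s ht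

theorem _root_.Int.ncard_Icc (a b : ℤ) : (Set.Icc a b).ncard = (b + 1 - a).toNat := by
  rw [← Finset.coe_Icc, Set.ncard_coe_finset, Int.card_Icc]

theorem _root_.Fin.exists_intCast_add_one_eq {T : ℕ} {j : ℤ} (h₁ : 1 ≤ j) (h₂ : j ≤ T) :
    ∃ t : Fin T, j = (t : ℤ) + 1 :=
  ⟨⟨(j - 1).toNat, by omega⟩, by simp; omega⟩

def columnDiagram {T : ℕ} (I : Fin T → ℤ × ℤ) : Set (ℤ × ℤ) :=
  ⋃ t, Set.Icc (I t).1 (I t).2 ×ˢ {(t : ℤ) + 1}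

section columnDiagram

variable {T : ℕ} {I : Fin T → ℤ × ℤ}

theorem mem_columnDiagram {q : ℤ × ℤ} :
    q ∈ columnDiagram I ↔ ∃ t : Fin T, q.2 = (t : ℤ) + 1 ∧ q.1 ∈ Set.Icc (I t).1 (I t).2 := by
  simp [columnDiagram, and_comm]

theorem column_columnDiagram (t : Fin T) :
    {i : ℤ | (i, (t : ℤ) + 1) ∈ columnDiagram I} = Set.Icc (I t).1 (I t).2 := by
  ext i
  simp only [Set.mem_ofPred_eq, mem_columnDiagram]
  refine ⟨?_, fun hi => ⟨t, rfl, hi⟩⟩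
  rintro ⟨s, hs, hi⟩
  rwa [Fin.ext (by omega : (s : ℕ) = t)] at hi

theorem ncard_column_columnDiagram_le {c : ℕ} (hI : ∀ t, (I t).2 - (I t).1 < c) (j : ℤ) :
    {i : ℤ | (i, j) ∈ columnDiagram I}.ncard ≤ c := by
  by_cases hj : ∃ t : Fin T, j = (t : ℤ) + 1
  · obtain ⟨t, rfl⟩ := hj
    rw [column_columnDiagram, Int.ncard_Icc]
    have := hI t
    omega
  · have hempty : {i : ℤ | (i, j) ∈ columnDiagram I} = ∅ :=
      Set.eq_empty_of_forall_notMem fun i hi => hj ((mem_columnDiagram.1 hi).imp fun _ => And.left)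
    simp [hempty]

theorem exists_mem_columnDiagram_iff (hI : ∀ t, (I t).1 ≤ (I t).2) (j : ℤ) :
    (∃ i : ℤ, (i, j) ∈ columnDiagram I) ↔ 1 ≤ j ∧ j ≤ (T : ℤ) := by
  simp only [mem_columnDiagram]
  constructor
  · rintro ⟨i, t, rfl, -⟩
    omega
  · rintro ⟨h₁, h₂⟩
    obtain ⟨t, rfl⟩ := Fin.exists_intCast_add_one_eq h₁ h₂
    exact ⟨(I t).1, t, rfl, Set.left_mem_Icc.2 (hI t)⟩

theorem isSkewDiagram_columnDiagram (hanti : Antitone I) (hI : ∀ t, (I t).1 ≤ (I t).2) :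
    IsSkewDiagram (columnDiagram I) := by
  refine ⟨Set.finite_iUnion fun t => (Set.finite_Icc _ _).prod (Set.finite_singleton _),
    ?_, ?_, ?_⟩
  · rintro q hq
    obtain ⟨t, ht, -⟩ := mem_columnDiagram.1 hq
    omega
  · rintro ⟨q, hq⟩
    obtain ⟨t, -, -⟩ := mem_columnDiagram.1 hq
    exact ⟨_, mem_columnDiagram.2 ⟨⟨0, t.pos⟩, by simp, Set.left_mem_Icc.2 (hI _)⟩⟩
  · intro i j _ hij
    simp only [mem_columnDiagram, not_exists, not_and, Set.mem_Icc, not_le] at hij ⊢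
    by_cases hj : ∃ t : Fin T, j = (t : ℤ) + 1
    · obtain ⟨t, rfl⟩ := hj
      by_cases hi : i < (I t).1
      · right
        rintro i' j' hi' hj' s rfl
        have := (hanti (show s ≤ t by rw [Fin.le_def]; omega)).1
        omega
      · have := hij t rfl (not_lt.1 hi)
        left
        rintro i' j' hi' hj' s rfl
        have := (hanti (show t ≤ s by rw [Fin.le_def]; omega)).2
        omega
    · left
      rintro i' j' - hj' s rfl
      exact absurd (Fin.exists_intCast_add_one_eq (by omega) (by omega)) hj

theorem injOn_columnDiagram :
    Set.InjOn (columnDiagram (T := T)) {I | ∀ t, (I t).1 ≤ (I t).2} := by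
  intro I hI I' hI' h
  funext t
  have hcol := column_columnDiagram (I := I) t
  rw [h, column_columnDiagram, eq_comm, Set.Icc_eq_Icc_iff (hI t)] at hcol
  exact Prod.ext hcol.1 hcol.2

end columnDiagram

section IsSkewDiagram

variable {D : Set (ℤ × ℤ)}

theorem IsSkewDiagram.mem_of_le_of_le (hD : IsSkewDiagram D) {i₁ j₁ i₂ j₂ i j : ℤ}
    (h₁ : (i₁, j₁) ∈ D) (h₂ : (i₂, j₂) ∈ D) (hi₁ : i₁ ≤ i) (hi₂ : i ≤ i₂) (hj₁ : j₁ ≤ j)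
    (hj₂ : j ≤ j₂) : (i, j) ∈ D := by
  by_contra hij
  have : 0 < j := (hD.2.1 _ h₁).trans_le hj₁
  rcases hD.2.2.2 i j this hij with h | h
  · exact h i₂ j₂ hi₂ hj₂ h₂
  · exact h i₁ j₁ hi₁ hj₁ h₁

theorem IsSkewDiagram.exists_column_eq_Icc (hD : IsSkewDiagram D) {j : ℤ}
    (hj : ∃ i, (i, j) ∈ D) : ∃ a b : ℤ, a ≤ b ∧ {i : ℤ | (i, j) ∈ D} = Set.Icc a b := by
  have hfin : {i : ℤ | (i, j) ∈ D}.Finite :=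
    hD.1.preimage fun _ _ _ _ h => congrArg Prod.fst h
  obtain ⟨a, ha, hamin⟩ := Set.exists_min_image _ id hfin hj
  obtain ⟨b, hb, hbmax⟩ := Set.exists_max_image _ id hfin hj
  refine ⟨a, b, hamin b hb, Set.Subset.antisymm (fun i hi => ⟨hamin i hi, hbmax i hi⟩) ?_⟩
  exact fun i hi => hD.mem_of_le_of_le ha hb hi.1 hi.2 le_rfl le_rfl

theorem IsSkewDiagram.exists_eq_columnDiagram {T : ℕ} (hD : IsSkewDiagram D)
    (hcols : ∀ j : ℤ, (∃ i : ℤ, (i, j) ∈ D) ↔ 1 ≤ j ∧ j ≤ (T : ℤ)) :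
    ∃ I : Fin T → ℤ × ℤ, Antitone I ∧ (∀ t, (I t).1 ≤ (I t).2) ∧ D = columnDiagram I := by
  choose a b hab hcol using fun t : Fin T =>
    hD.exists_column_eq_Icc ((hcols ((t : ℤ) + 1)).2 ⟨by omega, by omega⟩)
  have hmem (t : Fin T) (i : ℤ) : (i, (t : ℤ) + 1) ∈ D ↔ a t ≤ i ∧ i ≤ b t :=
    Set.ext_iff.1 (hcol t) i
  refine ⟨fun t => (a t, b t), Fin.antitone_iff_forall_succ_le.2 fun t h => ?_, hab, ?_⟩
  · set t' : Fin T := ⟨(t : ℕ) + 1, h⟩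
    have ht' : (t' : ℤ) + 1 = (t : ℤ) + 1 + 1 := by simp [t']
    -- `(a t, t + 1)` and `(b t', t + 2)` span a rectangle that lies in `D`.
    have hrect (i j : ℤ) (hi₁ : a t ≤ i) (hi₂ : i ≤ b t') (hj₁ : (t : ℤ) + 1 ≤ j)
        (hj₂ : j ≤ (t' : ℤ) + 1) : (i, j) ∈ D :=
      hD.mem_of_le_of_le ((hmem t _).2 ⟨le_rfl, hab t⟩) ((hmem t' _).2 ⟨hab t', le_rfl⟩)
        hi₁ hi₂ hj₁ hj₂
    constructor
    · by_contra! hlt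
      have := (hmem t' (a t)).1 (hrect _ _ le_rfl (by linarith [hab t']) (by omega) le_rfl)
      exact absurd this.1 (not_le.2 hlt)
    · by_contra! hlt
      have := (hmem t (b t')).1 (hrect _ _ (by linarith [hab t]) le_rfl le_rfl (by omega))
      exact absurd this.2 (not_le.2 hlt)
  · ext ⟨i, j⟩
    rw [mem_columnDiagram]
    constructor
    · intro hij
      obtain ⟨hj₁, hj₂⟩ := (hcols j).1 ⟨i, hij⟩
      obtain ⟨t, rfl⟩ := Fin.exists_intCast_add_one_eq hj₁ hj₂
      exact ⟨t, rfl, (hmem t i).1 hij⟩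
    · rintro ⟨t, rfl, hi⟩
      exact (hmem t i).2 hi

end IsSkewDiagram

def antitoneIntervals (T c : ℕ) : Set (Fin T → ℤ × ℤ) :=
  {I | Antitone I ∧ ∀ t, (I t).1 ≤ (I t).2 ∧ (I t).2 - (I t).1 < c}

theorem image_columnDiagram_antitoneIntervals (T c : ℕ) :
    columnDiagram '' antitoneIntervals T c =
      {D : Set (ℤ × ℤ) | IsSkewDiagram D ∧
        (∀ j : ℤ, (∃ i : ℤ, (i, j) ∈ D) ↔ 1 ≤ j ∧ j ≤ (T : ℤ)) ∧
        (∀ j : ℤ, {i : ℤ | (i, j) ∈ D}.ncard ≤ c)} := by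
  ext D
  constructor
  · rintro ⟨I, ⟨hanti, hI⟩, rfl⟩
    exact ⟨isSkewDiagram_columnDiagram hanti fun t => (hI t).1,
      exists_mem_columnDiagram_iff (fun t => (hI t).1),
      ncard_column_columnDiagram_le fun t => (hI t).2⟩
  · rintro ⟨hD, hcols, hcard⟩
    obtain ⟨I, hanti, hI, rfl⟩ := hD.exists_eq_columnDiagram hcols
    refine ⟨I, ⟨hanti, fun t => ⟨hI t, ?_⟩⟩, rfl⟩
    have := hcard ((t : ℤ) + 1)
    rw [column_columnDiagram, Int.ncard_Icc] at this
    omega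

/-- The point `(i, k)` with `i = b - a + 1` and `k` chosen so that column `j` of `diagOf` is
the interval `[a, b]`. -/
def intervalPoint (S : Setting) (j a b : ℤ) : ℕ × ℤ :=
  ((b - a + 1).toNat, 2 * rd S * (j - a) - rd S * (b - a))

def intervalSnake (S : Setting) {T : ℕ} (I : Fin T → ℤ × ℤ) : Fin T → ℕ × ℤ :=
  fun t => intervalPoint S ((t : ℤ) + 1) (I t).1 (I t).2

theorem Xp_subset_X (S : Setting) : Xp S ⊆ X S := by
  cases S with
  | A n => exact fun _ h => h
  | B n ε => exact fun _ h => h.1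

theorem mem_Xp_iff_exists_intervalPoint (S : Setting) (j : ℤ) {ik : ℕ × ℤ} :
    ik ∈ Xp S ↔ ∃ a b : ℤ, a ≤ b ∧ b - a < colBound S ∧ intervalPoint S j a b = ik := by
  obtain ⟨i, k⟩ := ik
  cases S with
  | A n =>
    simp only [Xp, XA, colBound, intervalPoint, rd, Set.mem_ofPred_eq, Prod.mk.injEq]
    constructor
    · rintro ⟨h1, h2, h3⟩
      exact ⟨j - (k + i - 1) / 2, j - (k + i - 1) / 2 + i - 1, by omega, by omega, by omega,
        by omega⟩
    · rintro ⟨a, b, hab, hb, rfl, rfl⟩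
      omega
  | B n ε =>
    simp only [Xp, XB, colBound, intervalPoint, rd, Set.mem_ofPred_eq, Prod.mk.injEq]
    constructor
    · rintro ⟨h1, h2, h3⟩
      exact ⟨j - (k + 2 * i - 2) / 4, j - (k + 2 * i - 2) / 4 + i - 1, by omega, by omega,
        by omega, by omega⟩
    · rintro ⟨a, b, hab, hb, rfl, rfl⟩
      omega

theorem snakePos_intervalPoint_iff (S : Setting) {j j' a b a' b' : ℤ} (hj : j' = j + 1)
    (hab : a ≤ b) (hb : b - a < colBound S) (hab' : a' ≤ b') (hb' : b' - a' < colBound S) :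
    SnakePos S (intervalPoint S j a b) (intervalPoint S j' a' b') ↔ a' ≤ a ∧ b' ≤ b := by
  subst hj
  cases S with
  | A n =>
    simp only [SnakePos, intervalPoint, rd, colBound] at hb hb' ⊢
    rcases abs_cases (((b' - a' + 1).toNat : ℕ) - ((b - a + 1).toNat : ℕ) : ℤ) with
      ⟨h, hs⟩ | ⟨h, hs⟩ <;> rw [h] <;> omega
  | B n ε =>
    simp only [colBound] at hb hb'
    have hi : (intervalPoint (.B n ε) j a b).1 ≠ n := by simp only [intervalPoint]; omega
    have hi' : (intervalPoint (.B n ε) (j + 1) a' b').1 ≠ n := by simp only [intervalPoint]; omega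
    simp only [SnakePos, hi, hi', false_and, or_self, if_false]
    simp only [intervalPoint, rd]
    rcases abs_cases (((b' - a' + 1).toNat : ℕ) - ((b - a + 1).toNat : ℕ) : ℤ) with
      ⟨h, hs⟩ | ⟨h, hs⟩ <;> rw [h] <;> omega

theorem diagOf_intervalSnake (S : Setting) {T : ℕ} (I : Fin T → ℤ × ℤ) :
    diagOf S (intervalSnake S I) = columnDiagram I := by
  ext ⟨s, j⟩
  simp only [diagOf, intervalSnake, intervalPoint, mem_columnDiagram, Set.mem_Icc,
    Set.mem_ofPred_eq]
  refine exists_congr fun t => and_congr_right fun _ => ?_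
  cases S <;> simp only [rd] <;> omega

theorem setOf_snake_eq_image_intervalSnake (S : Setting) (T : ℕ) :
    {w : Fin T → ℕ × ℤ | (∀ t, w t ∈ Xp S) ∧ IsSnake S w} =
      intervalSnake S '' antitoneIntervals T (colBound S) := by
  ext w
  constructor
  · rintro ⟨hXp, -, hsnake⟩
    choose a b hab hb hw using fun t : Fin T =>
      (mem_Xp_iff_exists_intervalPoint S ((t : ℤ) + 1)).1 (hXp t)
    obtain rfl : intervalSnake S (fun t => (a t, b t)) = w := funext hw
    refine ⟨_, ⟨Fin.antitone_iff_forall_succ_le.2 fun t h => ?_, fun t => ⟨hab t, hb t⟩⟩, rfl⟩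
    exact (snakePos_intervalPoint_iff S (by simp) (hab _) (hb _) (hab _) (hb _)).1 (hsnake t h)
  · rintro ⟨I, ⟨hanti, hI⟩, rfl⟩
    have hXp (t : Fin T) : intervalSnake S I t ∈ Xp S :=
      (mem_Xp_iff_exists_intervalPoint S _).2 ⟨_, _, (hI t).1, (hI t).2, rfl⟩
    refine ⟨hXp, fun t => Xp_subset_X S (hXp t), fun t h => ?_⟩
    exact (snakePos_intervalPoint_iff S (by simp) (hI _).1 (hI _).2 (hI _).1 (hI _).2).2
      (Fin.antitone_iff_forall_succ_le.1 hanti t h)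

theorem stmt14_general (S : Setting) (T : ℕ) :
    Set.BijOn (fun w => diagOf S w)
      {w : Fin T → ℕ × ℤ | (∀ t, w t ∈ Xp S) ∧ IsSnake S w}
      {D : Set (ℤ × ℤ) | IsSkewDiagram D ∧
        (∀ j : ℤ, (∃ i : ℤ, (i, j) ∈ D) ↔ 1 ≤ j ∧ j ≤ (T : ℤ)) ∧
        (∀ j : ℤ, {i : ℤ | (i, j) ∈ D}.ncard ≤ colBound S)} := by
  rw [setOf_snake_eq_image_intervalSnake, ← image_columnDiagram_antitoneIntervals]
  exact Set.bijOn_image_of_eqOn (injOn_columnDiagram.mono fun I hI t => (hI.2 t).1)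
    fun I _ => diagOf_intervalSnake S I

/-- the map sending a snake with elements in `X'` to its skew diagram is a
bijection from the set of snakes of length `T` with elements in `X'` onto the set of skew
diagrams whose non-empty columns are exactly `1, …, T` and none of whose columns has more
than `N` boxes (type A), resp. `N-1` boxes (type B). -/
theorem stmt14 (S : Setting) (hS : S.valid) (T : ℕ) (hT : 1 ≤ T) :
    Set.BijOn (fun w => diagOf S w)
      {w : Fin T → ℕ × ℤ | (∀ t, w t ∈ Xp S) ∧ IsSnake S w}
      {D : Set (ℤ × ℤ) | IsSkewDiagram D ∧
        (∀ j : ℤ, (∃ i : ℤ, (i, j) ∈ D) ↔ 1 ≤ j ∧ j ≤ (T : ℤ)) ∧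
        (∀ j : ℤ, {i : ℤ | (i, j) ∈ D}.ncard ≤ colBound S)} :=
  stmt14_general S T

end Paper
end

section
/- Let the setting be type A_N (N ≥ 1). Let (i_t,k_t), 1 ≤ t ≤ T, be a snake in X and let D be the associated skew diagram, D = {(s,t) : 1 ≤ t ≤ T, t − k_t/2 − (i_t−1)/2 ≤ s ≤ t − k_t/2 + (i_t−1)/2}. Then there is a bijection between the set P̄_{(i_t,k_t)} of non-overlapping tuples of paths and the set of type A skew tableaux of shape D, under which a tuple (p_1,…,p_T) corresponds to a tableau 𝒯 satisfying ∏_{t=1}^T m(p_t) = M(𝒯) in the free abelian group M. -/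
/-!
A path of `𝒫_{i,k}` has `N + 1` steps, exactly `i` of which go down, so it is determined by the
endpoints `1 ≤ d_1 < ⋯ < d_i ≤ N + 1` of its down steps; these fill column `t` of the tableau
from top to bottom, and conversely every strictly increasing column comes from a path. With the
columns placed as in `D`, the path of column `t` lies strictly above the path of column `t + 1`
exactly when the rows weakly increase (the converse direction uses the snake inequality), and
non-overlapping is checked on consecutive paths. Finally the monomial telescopes: the box
`⟦d_m⟧` contributes `Y` at the end and `Y⁻¹` at the start of the `m`-th down step, so the
contributions of consecutive down steps cancel and only the upper and lower corners survive.
-/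

namespace Paper

namespace TypeA

open Finset
open scoped Classical

def IsDownStep (p : List (ℝ × ℝ)) (b : ℕ) : Prop := (pt p (b + 1)).2 = (pt p b).2 - 1

noncomputable def downCount (p : List (ℝ × ℝ)) (a : ℕ) : ℕ := Nat.count (IsDownStep p) a

/-- For `1 ≤ m`, the `m`-th down step of `p` is the step `downPos p m - 1 → downPos p m`; this
endpoint is the tableau letter attached to it. -/
noncomputable def downPos (p : List (ℝ × ℝ)) (m : ℕ) : ℕ := sInf {a | m ≤ downCount p a}

lemma downCount_succ (p : List (ℝ × ℝ)) (a : ℕ) :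
    downCount p (a + 1) = downCount p a + if IsDownStep p a then 1 else 0 :=
  Nat.count_succ _ _

lemma downCount_mono (p : List (ℝ × ℝ)) : Monotone (downCount p) :=
  Nat.count_monotone _

section Path

variable {n i : ℕ} {k : ℤ} {p : List (ℝ × ℝ)}

lemma fst_pt (hp : p ∈ pathsA n i k) {a : ℕ} (ha : a ≤ n + 1) : (pt p a).1 = a :=
  hp.2.1 a (by omega)

lemma not_isDownStep_iff (hp : p ∈ pathsA n i k) {b : ℕ} (hb : b ≤ n) :
    ¬ IsDownStep p b ↔ (pt p (b + 1)).2 = (pt p b).2 + 1 := by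
  unfold IsDownStep
  rcases hp.2.2.2.2 b hb with h | h
  · exact ⟨fun _ => by linarith, fun _ _ => by linarith⟩
  · exact ⟨fun hnd => absurd (by linarith) hnd, fun _ => by linarith⟩

lemma snd_pt (hp : p ∈ pathsA n i k) {a : ℕ} (ha : a ≤ n + 1) :
    (pt p a).2 = i + k + a - 2 * (downCount p a : ℝ) := by
  induction a with
  | zero => simp [downCount, hp.2.2.1]
  | succ a ih =>
    rw [downCount_succ]
    by_cases hd : IsDownStep p a
    · rw [hd, ih (by omega)]; simp [hd]; ring
    · rw [(not_isDownStep_iff hp (by omega)).1 hd, ih (by omega)]; simp [hd]; ring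

lemma downCount_last (hp : p ∈ pathsA n i k) : downCount p (n + 1) = i := by
  have h := snd_pt hp le_rfl
  rw [hp.2.2.2.1] at h
  push_cast at h
  exact_mod_cast (by linarith : (downCount p (n + 1) : ℝ) = i)

lemma downCount_le (hp : p ∈ pathsA n i k) {a : ℕ} (ha : a ≤ n + 1) : downCount p a ≤ i :=
  downCount_last hp ▸ downCount_mono p ha

lemma downPos_le_iff (hp : p ∈ pathsA n i k) {m a : ℕ} (hm : m ≤ i) :
    downPos p m ≤ a ↔ m ≤ downCount p a := by
  have hne : {a | m ≤ downCount p a}.Nonempty := ⟨n + 1, (downCount_last hp).ge.trans' hm⟩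
  exact ⟨fun h => le_trans (Nat.sInf_mem (s := {a | m ≤ downCount p a}) hne)
    (downCount_mono p h), fun h => Nat.sInf_le h⟩

lemma downPos_le (hp : p ∈ pathsA n i k) {m : ℕ} (hm : m ≤ i) : downPos p m ≤ n + 1 :=
  (downPos_le_iff hp hm).2 (downCount_last hp ▸ hm)

lemma downPos_spec (hp : p ∈ pathsA n i k) {m : ℕ} (h1 : 1 ≤ m) (hm : m ≤ i) :
    ∃ b, downPos p m = b + 1 ∧ IsDownStep p b ∧ downCount p b + 1 = m := by
  have hle := (downPos_le_iff hp hm).1 le_rfl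
  obtain ⟨b, hb⟩ : ∃ b, downPos p m = b + 1 := by
    refine Nat.exists_eq_succ_of_ne_zero fun h0 => ?_
    rw [h0, downCount, Nat.count_zero] at hle
    omega
  have hlt : ¬ m ≤ downCount p b := by rw [← downPos_le_iff hp hm]; omega
  rw [hb, downCount_succ] at hle
  refine ⟨b, hb, ?_, ?_⟩ <;> split_ifs at hle with hd <;> first | exact hd | omega

lemma one_le_downPos (hp : p ∈ pathsA n i k) {m : ℕ} (h1 : 1 ≤ m) (hm : m ≤ i) :
    1 ≤ downPos p m := by
  obtain ⟨b, hb, -⟩ := downPos_spec hp h1 hm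
  omega

lemma downCount_downPos (hp : p ∈ pathsA n i k) {m : ℕ} (h1 : 1 ≤ m) (hm : m ≤ i) :
    downCount p (downPos p m) = m := by
  obtain ⟨b, hb, hd, hc⟩ := downPos_spec hp h1 hm
  rw [hb, downCount_succ, if_pos hd, hc]

lemma downPos_downCount_succ (hp : p ∈ pathsA n i k) {b : ℕ} (hb : b ≤ n)
    (hd : IsDownStep p b) : downPos p (downCount p b + 1) = b + 1 := by
  have hsucc : downCount p (b + 1) = downCount p b + 1 := by
    rw [downCount_succ, if_pos hd]
  have hi : downCount p b + 1 ≤ i := hsucc ▸ downCount_le hp (by omega)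
  refine le_antisymm ((downPos_le_iff hp hi).2 hsucc.ge) ?_
  by_contra! h
  have := (downPos_le_iff hp hi).1 (Nat.le_of_lt_succ h)
  omega

lemma downPos_strictMonoOn (hp : p ∈ pathsA n i k) : StrictMonoOn (downPos p) (Set.Icc 1 i) := by
  intro m hm m' hm' hlt
  by_contra! h
  have := (downPos_le_iff hp hm'.2).1 h
  rw [downCount_downPos hp hm.1 hm.2] at this
  omega

lemma eq_of_downCount_eq {p' : List (ℝ × ℝ)} (hp : p ∈ pathsA n i k) (hp' : p' ∈ pathsA n i k)
    (h : ∀ a ≤ n + 1, downCount p a = downCount p' a) : p = p' := by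
  refine List.ext_getElem (by rw [hp.1, hp'.1]) fun a ha ha' => ?_
  have han : a ≤ n + 1 := by rw [hp.1] at ha; omega
  rw [← List.getD_eq_getElem p (0, 0) ha, ← List.getD_eq_getElem p' (0, 0) ha']
  change pt p a = pt p' a
  exact Prod.ext (by rw [fst_pt hp han, fst_pt hp' han])
    (by rw [snd_pt hp han, snd_pt hp' han, h a han])

lemma eq_of_downPos_eq {p' : List (ℝ × ℝ)} (hp : p ∈ pathsA n i k) (hp' : p' ∈ pathsA n i k)
    (h : Set.EqOn (downPos p) (downPos p') (Set.Icc 1 i)) : p = p' := by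
  refine eq_of_downCount_eq hp hp' fun a ha => ?_
  have key : ∀ m ∈ Set.Icc 1 i, m ≤ downCount p a ↔ m ≤ downCount p' a := fun m hm => by
    rw [← downPos_le_iff hp hm.2, ← downPos_le_iff hp' hm.2, h hm]
  have h1 := downCount_le hp ha
  have h2 := downCount_le hp' ha
  by_contra hne
  rcases Nat.lt_or_gt_of_ne hne with hlt | hlt
  · have := (key _ ⟨by omega, h2⟩).2 le_rfl; omega
  · have := (key _ ⟨by omega, h1⟩).1 le_rfl; omega

lemma pt_mem (hp : p ∈ pathsA n i k) {a : ℕ} (ha : a ≤ n + 1) : pt p a ∈ p := by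
  have hlt : a < p.length := by rw [hp.1]; omega
  rw [pt, List.getD_eq_getElem p _ hlt]
  exact List.getElem_mem hlt

lemma exists_pt_eq (hp : p ∈ pathsA n i k) {q : ℝ × ℝ} (hq : q ∈ p) :
    ∃ a ≤ n + 1, pt p a = q := by
  obtain ⟨a, ha, rfl⟩ := List.mem_iff_getElem.1 hq
  exact ⟨a, by rw [hp.1] at ha; omega, List.getD_eq_getElem p _ ha⟩

end Path

section NonOverlapping

variable {n i i' : ℕ} {k k' : ℤ} {p p' : List (ℝ × ℝ)}

lemma strictlyAbove_iff (hp : p ∈ pathsA n i k) (hp' : p' ∈ pathsA n i' k') :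
    StrictlyAbove p p' ↔
      ∀ a ≤ n + 1, (i : ℤ) + k - 2 * downCount p a < i' + k' - 2 * downCount p' a := by
  constructor
  · intro h a ha
    have := h _ (pt_mem hp ha) _ (pt_mem hp' ha) (by rw [fst_pt hp ha, fst_pt hp' ha])
    rw [snd_pt hp ha, snd_pt hp' ha] at this
    have : ((i + k - 2 * downCount p a : ℤ) : ℝ) < ((i' + k' - 2 * downCount p' a : ℤ) : ℝ) := by
      push_cast; linarith
    exact_mod_cast this
  · rintro h q hq q' hq' hx
    obtain ⟨a, ha, rfl⟩ := exists_pt_eq hp hq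
    obtain ⟨a', ha', rfl⟩ := exists_pt_eq hp' hq'
    rw [fst_pt hp ha, fst_pt hp' ha'] at hx
    obtain rfl : a = a' := by exact_mod_cast hx
    have : ((i + k - 2 * downCount p a : ℤ) : ℝ) < ((i' + k' - 2 * downCount p' a : ℤ) : ℝ) := by
      exact_mod_cast h a ha
    rw [snd_pt hp ha, snd_pt hp' ha]
    push_cast at this
    linarith

lemma downPos_le_of_strictlyAbove (hp : p ∈ pathsA n i k) (hp' : p' ∈ pathsA n i' k')
    (hab : StrictlyAbove p p') {m m' : ℕ} (hm : m ≤ i) (hm' : m' ∈ Set.Icc 1 i')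
    (hrow : 2 * (m : ℤ) = 2 * m' + 2 + i + k - i' - k') : downPos p m ≤ downPos p' m' := by
  rw [downPos_le_iff hp hm]
  have := (strictlyAbove_iff hp hp').1 hab _ (downPos_le hp' hm'.2)
  rw [downCount_downPos hp' hm'.1 hm'.2] at this
  omega

/-- At `x = a`, compare the `downCount p' a`-th entry of the column of `p'` with the entry of the
column of `p` in the same row; the snake inequality guarantees that this row meets the column
of `p` whenever the comparison is needed. -/
lemma strictlyAbove_of_downPos_le (hp : p ∈ pathsA n i k) (hp' : p' ∈ pathsA n i' k')
    (hpar : ((i : ℤ) + k - i' - k') % 2 = 0) (hsnake : |(i' : ℤ) - i| + 2 ≤ k' - k)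
    (h : ∀ m ∈ Set.Icc 1 i, ∀ m' ∈ Set.Icc 1 i',
      2 * (m : ℤ) = 2 * m' + 2 + i + k - i' - k' → downPos p m ≤ downPos p' m') :
    StrictlyAbove p p' := by
  rw [strictlyAbove_iff hp hp']
  intro a ha
  have hm'i := downCount_le hp' ha
  have habs1 := le_abs_self ((i' : ℤ) - i)
  have habs2 := neg_abs_le ((i' : ℤ) - i)
  obtain ⟨m, hm⟩ : ∃ m : ℕ, 2 * (m : ℤ) = max 0 (2 * downCount p' a + 2 + i + k - i' - k') :=
    ⟨(max 0 (2 * downCount p' a + 2 + i + k - i' - k') / 2).toNat, by omega⟩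
  rcases Nat.eq_zero_or_pos m with h0 | h0
  · omega
  · have hmi : m ≤ i := by omega
    have hpos : 1 ≤ downCount p' a := by omega
    have hle := h m ⟨h0, hmi⟩ _ ⟨hpos, hm'i⟩ (by omega)
    have := (downPos_le_iff hp hmi).1 (hle.trans ((downPos_le_iff hp' hm'i).2 le_rfl))
    omega

lemma strictMono_fin_of_lt_succ {α : Type*} [Preorder α] {T : ℕ} {g : Fin T → α}
    (h : ∀ (t : Fin T) (ht : (t : ℕ) + 1 < T), g t < g ⟨t + 1, ht⟩) : StrictMono g := by
  cases T with
  | zero => exact fun a => a.elim0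
  | succ T => exact Fin.strictMono_iff_lt_succ.2 fun t => h t.castSucc (by simp)

lemma nonOverlapping_of_succ {T : ℕ} {w : Fin T → ℕ × ℤ} {ps : Fin T → List (ℝ × ℝ)}
    (hp : ∀ t, ps t ∈ pathsA n (w t).1 (w t).2)
    (h : ∀ (t : Fin T) (ht : (t : ℕ) + 1 < T), StrictlyAbove (ps t) (ps ⟨t + 1, ht⟩)) :
    NonOverlapping ps := by
  intro s t hst
  rw [strictlyAbove_iff (hp s) (hp t)]
  intro a ha
  exact strictMono_fin_of_lt_succ
    (g := fun t => ((w t).1 : ℤ) + (w t).2 - 2 * downCount (ps t) a)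
    (fun t ht => (strictlyAbove_iff (hp _) (hp _)).1 (h t ht) a ha) hst

end NonOverlapping

section Monomial

variable {n i : ℕ} {k : ℤ} {p : List (ℝ × ℝ)}

lemma ind_eq_ite (s : Prop) [Decidable s] : ind s = if s then 1 else 0 := by
  by_cases h : s <;> simp [ind, h]

lemma mon_apply (hp : p ∈ pathsA n i k) (j : ℕ) (l : ℤ) :
    mon (Setting.A n) p (j, l) =
      if 1 ≤ j ∧ j ≤ n ∧ l = i + k + j - 2 * (downCount p j : ℤ) then
        (if IsDownStep p (j - 1) then 1 else 0) - (if IsDownStep p j then 1 else 0)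
      else 0 := by
  simp only [mon, Cp, Set.mem_ofPred_eq, ind_eq_ite, if_true, Bool.false_eq_true, if_false]
  by_cases hj : 1 ≤ j ∧ j ≤ n
  swap
  · obtain hj | hj : ¬ 1 ≤ j ∨ ¬ j ≤ n := by omega
    all_goals simp [hj]
  have hpt : pt p j = ((j : ℝ), (l : ℝ)) ↔ l = i + k + j - 2 * (downCount p j : ℤ) := by
    rw [Prod.ext_iff]
    dsimp only
    rw [fst_pt hp (by omega), snd_pt hp (by omega)]
    constructor
    · rintro ⟨-, h⟩; exact_mod_cast h.symm
    · rintro rfl; push_cast; simp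
  by_cases hl : l = i + k + j - 2 * (downCount p j : ℤ)
  swap
  · simp only [hpt, hl, false_and, and_false, if_false, sub_zero]
  have hlj : (pt p j).2 = l := by rw [snd_pt hp (by omega), hl]; push_cast; ring
  have hin : (pt p (j - 1)).2 = l + 1 ↔ IsDownStep p (j - 1) := by
    unfold IsDownStep
    rw [Nat.sub_add_cancel hj.1]
    constructor <;> intro h <;> linarith
  have hin' : (pt p (j - 1)).2 = l + -1 ↔ ¬ IsDownStep p (j - 1) := by
    rw [not_isDownStep_iff hp (by omega), Nat.sub_add_cancel hj.1]
    constructor <;> intro h <;> linarith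
  have hout : (pt p (j + 1)).2 = l + 1 ↔ ¬ IsDownStep p j := by
    rw [not_isDownStep_iff hp hj.2, hlj]
  have hout' : (pt p (j + 1)).2 = l + -1 ↔ IsDownStep p j := by
    unfold IsDownStep
    rw [hlj, sub_eq_add_neg]
  rw [if_pos (⟨hj.1, hj.2, hl⟩ : 1 ≤ j ∧ j ≤ n ∧ l = i + k + j - 2 * (downCount p j : ℤ))]
  simp only [hj, hpt.2 hl, hin, hin', hout, hout', true_and]
  by_cases h1 : IsDownStep p (j - 1) <;> by_cases h2 : IsDownStep p j <;> simp [h1, h2]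

lemma sum_ite_downPos_eq (hp : p ∈ pathsA n i k) (a : ℕ) (g : ℕ → ℤ) :
    ∑ m ∈ Icc 1 i, (if downPos p m = a then g m else 0) =
      if 1 ≤ a ∧ a ≤ n + 1 ∧ IsDownStep p (a - 1) then g (downCount p a) else 0 := by
  split_ifs with ha
  · obtain ⟨b, rfl⟩ : ∃ b, a = b + 1 := ⟨a - 1, by omega⟩
    obtain ⟨-, hbn, hd⟩ := ha
    rw [Nat.add_sub_cancel] at hd
    have hc : downCount p (b + 1) = downCount p b + 1 := by rw [downCount_succ, if_pos hd]
    rw [Finset.sum_eq_single (downCount p b + 1), if_pos (downPos_downCount_succ hp (by omega) hd),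
      hc]
    · intro m hm hne
      rw [mem_Icc] at hm
      refine if_neg fun h => hne ?_
      rw [← downCount_downPos hp hm.1 hm.2, h, hc]
    · intro h
      exact absurd (mem_Icc.2 ⟨by omega, hc ▸ downCount_le hp hbn⟩) h
  · refine sum_eq_zero fun m hm => if_neg fun h => ha ?_
    rw [mem_Icc] at hm
    obtain ⟨b, hb, hd, -⟩ := downPos_spec hp hm.1 hm.2
    have := downPos_le hp hm.2
    refine ⟨by omega, by omega, ?_⟩
    rwa [← h, hb, Nat.add_sub_cancel]

lemma boxA_apply {a : ℕ} (ha : 1 ≤ a) (e : ℤ) (j : ℕ) (l : ℤ) :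
    boxA n a e (j, l) =
      (if a = j then (if j ≠ n + 1 ∧ l = j - 1 + e then 1 else 0) else 0) -
        (if a = j + 1 then (if j ≠ 0 ∧ l = j + 1 + e then 1 else 0) else 0) := by
  simp only [boxA, Pi.sub_apply, ite_apply, Pi.zero_apply, Y, Prod.mk.injEq]
  split_ifs <;> first | rfl | omega

lemma sum_boxA_downPos_apply (hp : p ∈ pathsA n i k) (j : ℕ) (l : ℤ) :
    (∑ m ∈ Icc 1 i, boxA n (downPos p m) (k + i + 1 - 2 * m)) (j, l) =
      if 1 ≤ j ∧ j ≤ n ∧ l = i + k + j - 2 * (downCount p j : ℤ) then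
        (if IsDownStep p (j - 1) then 1 else 0) - (if IsDownStep p j then 1 else 0)
      else 0 := by
  rw [Finset.sum_apply]
  rw [Finset.sum_congr rfl fun m hm =>
    boxA_apply (one_le_downPos hp (mem_Icc.1 hm).1 (mem_Icc.1 hm).2) _ j l]
  rw [sum_sub_distrib, sum_ite_downPos_eq hp j, sum_ite_downPos_eq hp (j + 1), Nat.add_sub_cancel]
  have hc := downCount_succ p j
  by_cases h1 : IsDownStep p (j - 1) <;> by_cases h2 : IsDownStep p j <;>
    simp only [h1, h2, and_true, and_false, if_true, if_false] at hc ⊢ <;> split_ifs <;> omega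

lemma mon_eq_sum_boxA (hp : p ∈ pathsA n i k) :
    mon (Setting.A n) p = ∑ m ∈ Icc 1 i, boxA n (downPos p m) (k + i + 1 - 2 * m) :=
  funext fun ⟨j, l⟩ => by rw [mon_apply hp, sum_boxA_downPos_apply hp]

end Monomial

section PathOfDownPos

variable {n i : ℕ} {k : ℤ} {d : ℕ → ℕ}

def numDownLE (i : ℕ) (d : ℕ → ℕ) (a : ℕ) : ℕ := #{m ∈ Icc 1 i | d m ≤ a}

/-- The path of `𝒫_{i,k}` whose `m`-th down step ends at `x = d m`. -/
noncomputable def pathOfDownPos (n i : ℕ) (k : ℤ) (d : ℕ → ℕ) : List (ℝ × ℝ) :=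
  (List.range (n + 2)).map fun a : ℕ => ((a : ℝ), i + k + a - 2 * (numDownLE i d a : ℝ))

lemma numDownLE_mono : Monotone (numDownLE i d) :=
  fun _ _ hab => card_le_card fun m hm => by
    rw [mem_filter] at hm ⊢; exact ⟨hm.1, hm.2.trans hab⟩

lemma numDownLE_le (a : ℕ) : numDownLE i d a ≤ i :=
  (card_filter_le _ _).trans (Nat.card_Icc 1 i).le

lemma le_numDownLE_iff (hmono : StrictMonoOn d (Set.Icc 1 i)) {m : ℕ} (hm : m ∈ Set.Icc 1 i)
    (a : ℕ) : m ≤ numDownLE i d a ↔ d m ≤ a := by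
  constructor
  · intro h
    by_contra! ha
    have hsub : {m' ∈ Icc 1 i | d m' ≤ a} ⊆ Icc 1 (m - 1) := by
      intro m' hm'
      rw [mem_filter, mem_Icc] at hm'
      rw [mem_Icc]
      refine ⟨hm'.1.1, ?_⟩
      by_contra! h'
      have := hmono.monotoneOn hm ⟨hm'.1.1, hm'.1.2⟩ (by omega : m ≤ m')
      omega
    have := card_le_card hsub
    rw [Nat.card_Icc] at this
    unfold numDownLE at h
    have := hm.1
    omega
  · intro h
    have hsub : Icc 1 m ⊆ {m' ∈ Icc 1 i | d m' ≤ a} := by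
      intro m' hm'
      rw [mem_Icc] at hm'
      rw [mem_filter, mem_Icc]
      exact ⟨⟨hm'.1, hm'.2.trans hm.2⟩,
        (hmono.monotoneOn ⟨hm'.1, hm'.2.trans hm.2⟩ hm hm'.2).trans h⟩
    simpa [numDownLE] using card_le_card hsub

lemma numDownLE_zero (hd : Set.MapsTo d (Set.Icc 1 i) (Set.Icc 1 (n + 1))) :
    numDownLE i d 0 = 0 :=
  card_eq_zero.2 <| filter_eq_empty_iff.2 fun m hm h =>
    by have := (hd (mem_Icc.1 hm)).1; omega

lemma numDownLE_last (hd : Set.MapsTo d (Set.Icc 1 i) (Set.Icc 1 (n + 1))) :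
    numDownLE i d (n + 1) = i := by
  rw [numDownLE, filter_true_of_mem fun m hm => (hd (mem_Icc.1 hm)).2, Nat.card_Icc]
  omega

lemma numDownLE_succ_le (hmono : StrictMonoOn d (Set.Icc 1 i)) (a : ℕ) :
    numDownLE i d (a + 1) ≤ numDownLE i d a + 1 := by
  set c := numDownLE i d (a + 1)
  rcases Nat.lt_or_ge c 2 with hc | hc
  · omega
  have hci : c ≤ i := numDownLE_le _
  have hdc := (le_numDownLE_iff hmono ⟨by omega, hci⟩ (a + 1)).1 le_rfl
  have hlt := hmono ⟨by omega, by omega⟩ ⟨by omega, hci⟩ (by omega : c - 1 < c)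
  have := (le_numDownLE_iff hmono (m := c - 1) ⟨by omega, by omega⟩ a).2 (by omega)
  omega

lemma pt_pathOfDownPos {a : ℕ} (ha : a < n + 2) :
    pt (pathOfDownPos n i k d) a = ((a : ℝ), i + k + a - 2 * (numDownLE i d a : ℝ)) := by
  rw [pt, pathOfDownPos, List.getD_eq_getElem _ _ (by simpa using ha)]
  simp

variable (hd : Set.MapsTo d (Set.Icc 1 i) (Set.Icc 1 (n + 1)))
  (hmono : StrictMonoOn d (Set.Icc 1 i))
include hd hmono

lemma pathOfDownPos_mem : pathOfDownPos n i k d ∈ pathsA n i k := by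
  refine ⟨by simp [pathOfDownPos], fun r hr => by rw [pt_pathOfDownPos hr], ?_, ?_, fun r hr => ?_⟩
  · rw [pt_pathOfDownPos (by omega), numDownLE_zero hd]; simp
  · rw [pt_pathOfDownPos (by omega), numDownLE_last hd]; push_cast; ring
  · rw [pt_pathOfDownPos (by omega), pt_pathOfDownPos (by omega)]
    have h1 := numDownLE_mono (i := i) (d := d) (Nat.le_add_right r 1)
    have h2 := numDownLE_succ_le hmono r
    rcases (by omega : numDownLE i d (r + 1) = numDownLE i d r ∨
        numDownLE i d (r + 1) = numDownLE i d r + 1) with h | h <;>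
      rw [h] <;> push_cast <;> [left; right] <;> ring

lemma downCount_pathOfDownPos {a : ℕ} (ha : a ≤ n + 1) :
    downCount (pathOfDownPos n i k d) a = numDownLE i d a := by
  have h := snd_pt (pathOfDownPos_mem hd hmono (k := k)) ha
  rw [pt_pathOfDownPos (by omega)] at h
  exact_mod_cast (by linarith : (downCount (pathOfDownPos n i k d) a : ℝ) = numDownLE i d a)

lemma downPos_pathOfDownPos {m : ℕ} (hm : m ∈ Set.Icc 1 i) :
    downPos (pathOfDownPos n i k d) m = d m := by
  have hp := pathOfDownPos_mem hd hmono (k := k)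
  have hdm := hd hm
  refine le_antisymm ?_ ?_
  · rw [downPos_le_iff hp hm.2, downCount_pathOfDownPos hd hmono hdm.2,
      le_numDownLE_iff hmono hm]
  · have := (downPos_le_iff hp hm.2).1 le_rfl
    rwa [downCount_pathOfDownPos hd hmono (downPos_le hp hm.2), le_numDownLE_iff hmono hm] at this

end PathOfDownPos

section Tableau

variable {n T : ℕ} {w : Fin T → ℕ × ℤ}

/-- Column `t + 1` of `diagOf (Setting.A n) w` consists of the rows
`topRow w t, …, topRow w t + (w t).1 - 1`. -/
def topRow (w : Fin T → ℕ × ℤ) (t : Fin T) : ℤ := (2 * ((t : ℤ) + 1) - (w t).2 - (w t).1 + 1) / 2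

def box (w : Fin T → ℕ × ℤ) (t : Fin T) (m : ℕ) : ℤ × ℤ := (topRow w t + m - 1, (t : ℤ) + 1)

def diagFinset (w : Fin T → ℕ × ℤ) : Finset (ℤ × ℤ) :=
  (univ.sigma fun t => Icc 1 (w t).1).image fun x => box w x.1 x.2

/-- Column `t + 1` of the tableau lists the down steps of `ps t` from top to bottom. -/
noncomputable def tabOf (w : Fin T → ℕ × ℤ) (ps : Fin T → List (ℝ × ℝ)) (q : ℤ × ℤ) : ℕ :=
  ∑ t, ∑ m ∈ Icc 1 (w t).1, if box w t m = q then downPos (ps t) m else 0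

lemma box_inj {t t' : Fin T} {m m' : ℕ} : box w t m = box w t' m' ↔ t = t' ∧ m = m' := by
  simp only [box, Prod.mk.injEq]
  constructor
  · rintro ⟨h1, h2⟩
    have : t = t' := Fin.ext (by omega)
    subst this
    omega
  · rintro ⟨rfl, rfl⟩
    simp

lemma box_succ {t : Fin T} {m : ℕ} : box w t (m + 1) = ((box w t m).1 + 1, (box w t m).2) := by
  simp only [box]
  push_cast
  ring_nf

lemma sum_diagFinset {M : Type*} [AddCommMonoid M] (F : ℤ × ℤ → M) :
    ∑ q ∈ diagFinset w, F q = ∑ t, ∑ m ∈ Icc 1 (w t).1, F (box w t m) := by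
  rw [diagFinset, sum_image fun x _ y _ h => Sigma.ext (box_inj.1 h).1 (heq_of_eq (box_inj.1 h).2),
    sum_sigma]

lemma tabOf_box (ps : Fin T → List (ℝ × ℝ)) {t : Fin T} {m : ℕ} (hm : m ∈ Set.Icc 1 (w t).1) :
    tabOf w ps (box w t m) = downPos (ps t) m := by
  rw [tabOf, sum_eq_single t, sum_eq_single m, if_pos rfl]
  · exact fun m' _ hne => if_neg fun h => hne (box_inj.1 h).2
  · exact fun h => absurd (mem_Icc.2 hm) h
  · exact fun t' _ hne => sum_eq_zero fun m' _ => if_neg fun h => hne (box_inj.1 h).1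
  · exact fun h => absurd (mem_univ t) h

lemma tabOf_injOn : Set.InjOn (tabOf w) (PBar (Setting.A n) w) := by
  intro ps hps ps' hps' h
  funext t
  refine eq_of_downPos_eq (hps.1 t) (hps'.1 t) fun m hm => ?_
  rw [← tabOf_box ps hm, ← tabOf_box ps' hm, h]

variable (hpar : ∀ t, (((w t).1 : ℤ) - (w t).2) % 2 = 1)
include hpar

lemma two_mul_topRow (t : Fin T) : 2 * topRow w t = 2 * ((t : ℤ) + 1) - (w t).2 - (w t).1 + 1 := by
  have := hpar t
  rw [topRow]
  omega

lemma mem_diagOf_iff {q : ℤ × ℤ} :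
    q ∈ diagOf (Setting.A n) w ↔ ∃ t, ∃ m ∈ Set.Icc 1 (w t).1, box w t m = q := by
  obtain ⟨s, j⟩ := q
  simp only [diagOf, rd, Set.mem_ofPred_eq, box, Prod.mk.injEq, one_mul]
  constructor
  · rintro ⟨t, rfl, h1, h2⟩
    have := two_mul_topRow hpar t
    exact ⟨t, (s - topRow w t + 1).toNat, ⟨by omega, by omega⟩, by omega, rfl⟩
  · rintro ⟨t, m, ⟨hm1, hm2⟩, rfl, rfl⟩
    have := two_mul_topRow hpar t
    exact ⟨t, rfl, by omega, by omega⟩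

lemma coe_diagFinset : (diagFinset w : Set (ℤ × ℤ)) = diagOf (Setting.A n) w := by
  ext q
  simp [diagFinset, mem_diagOf_iff hpar]

lemma tabOf_of_notMem (ps : Fin T → List (ℝ × ℝ)) {q : ℤ × ℤ}
    (hq : q ∉ diagOf (Setting.A n) w) : tabOf w ps q = 0 :=
  sum_eq_zero fun t _ => sum_eq_zero fun m hm =>
    if_neg fun h => hq ((mem_diagOf_iff hpar).2 ⟨t, m, mem_Icc.1 hm, h⟩)

lemma box_eq_right_iff {t t' : Fin T} (htt : (t' : ℕ) = t + 1) (m m' : ℕ) :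
    box w t' m' = ((box w t m).1, (box w t m).2 + 1) ↔
      2 * (m : ℤ) = 2 * m' + 2 + (w t).1 + (w t).2 - (w t').1 - (w t').2 := by
  have := two_mul_topRow hpar t
  have := two_mul_topRow hpar t'
  simp only [box, Prod.mk.injEq]
  omega

lemma tabOf_mapsTo :
    Set.MapsTo (tabOf w) (PBar (Setting.A n) w) (TabA n (diagOf (Setting.A n) w)) := by
  rintro ps ⟨hp, hno⟩
  have hp : ∀ t, ps t ∈ pathsA n (w t).1 (w t).2 := hp
  refine ⟨fun q hq => ?_, fun q hq => tabOf_of_notMem hpar ps hq, fun s j hq hq' => ?_,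
    fun s j hq hq' => ?_⟩
  · obtain ⟨t, m, hm, rfl⟩ := (mem_diagOf_iff hpar).1 hq
    rw [tabOf_box ps hm]
    exact ⟨one_le_downPos (hp t) hm.1 hm.2, downPos_le (hp t) hm.2⟩
  · obtain ⟨t, m, hm, hb⟩ := (mem_diagOf_iff hpar).1 hq
    obtain ⟨t', m', hm', hb'⟩ := (mem_diagOf_iff hpar).1 hq'
    have htt : (t' : ℕ) = t + 1 := by
      have h1 := congrArg Prod.snd hb
      have h2 := congrArg Prod.snd hb'
      simp only [box] at h1 h2
      omega
    have hrow := (box_eq_right_iff hpar htt m m').1 (by rw [hb, hb'])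
    rw [← hb, ← hb', tabOf_box ps hm, tabOf_box ps hm']
    exact downPos_le_of_strictlyAbove (hp t) (hp t') (hno t t' (by rw [Fin.lt_def]; omega))
      hm.2 hm' (by omega)
  · obtain ⟨t, m, hm, hb⟩ := (mem_diagOf_iff hpar).1 hq
    obtain ⟨t', m', hm', hb'⟩ := (mem_diagOf_iff hpar).1 hq'
    obtain ⟨rfl, rfl⟩ : t' = t ∧ m' = m + 1 := box_inj.1 (by rw [hb', box_succ, hb])
    rw [← hb, ← hb', tabOf_box ps hm, tabOf_box ps hm']
    exact downPos_strictMonoOn (hp _) hm hm' (Nat.lt_succ_self m)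

lemma tmon_eq_MtabA {ps : Fin T → List (ℝ × ℝ)} (hps : ps ∈ PBar (Setting.A n) w) :
    tmon (Setting.A n) ps = MtabA n (diagOf (Setting.A n) w) (tabOf w ps) := by
  rw [MtabA, ← coe_diagFinset hpar, finsum_mem_coe_finset, sum_diagFinset, tmon]
  refine sum_congr rfl fun t _ => ?_
  rw [mon_eq_sum_boxA (hps.1 t)]
  refine sum_congr rfl fun m hm => ?_
  rw [tabOf_box ps (mem_Icc.1 hm)]
  have := two_mul_topRow hpar t
  congr 1
  simp only [box]
  omega

end Tableau

lemma tabOf_surjOn {n T : ℕ} {w : Fin T → ℕ × ℤ} (hw : IsSnake (Setting.A n) w) :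
    Set.SurjOn (tabOf w) (PBar (Setting.A n) w) (TabA n (diagOf (Setting.A n) w)) := by
  have hpar : ∀ t, (((w t).1 : ℤ) - (w t).2) % 2 = 1 := fun t => (hw.1 t).2.2
  rintro f ⟨hrange, hzero, hrow, hcol⟩
  have hmem : ∀ t, ∀ m ∈ Set.Icc 1 (w t).1, box w t m ∈ diagOf (Setting.A n) w :=
    fun t m hm => (mem_diagOf_iff hpar).2 ⟨t, m, hm, rfl⟩
  set d : Fin T → ℕ → ℕ := fun t m => f (box w t m)
  have hd : ∀ t, Set.MapsTo (d t) (Set.Icc 1 (w t).1) (Set.Icc 1 (n + 1)) :=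
    fun t m hm => hrange _ (hmem t m hm)
  have hmono : ∀ t, StrictMonoOn (d t) (Set.Icc 1 (w t).1) := fun t =>
    strictMonoOn_of_lt_succ Set.ordConnected_Icc fun m _ hm hm' => by
      rw [Order.succ_eq_add_one] at hm' ⊢
      show f (box w t m) < f (box w t (m + 1))
      rw [box_succ]
      exact hcol _ _ (hmem t m hm) (box_succ (w := w) ▸ hmem t (m + 1) hm')
  set ps : Fin T → List (ℝ × ℝ) := fun t => pathOfDownPos n (w t).1 (w t).2 (d t)
  have hp : ∀ t, ps t ∈ pathsA n (w t).1 (w t).2 := fun t => pathOfDownPos_mem (hd t) (hmono t)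
  refine ⟨ps, ⟨hp, nonOverlapping_of_succ hp fun t ht => ?_⟩, funext fun q => ?_⟩
  · have := hpar t
    have := hpar ⟨t + 1, ht⟩
    refine strictlyAbove_of_downPos_le (hp t) (hp _) (by omega) (hw.2 t ht)
      fun m hm m' hm' hrel => ?_
    rw [downPos_pathOfDownPos (hd t) (hmono t) hm, downPos_pathOfDownPos (hd _) (hmono _) hm']
    have hb := (box_eq_right_iff hpar (t' := ⟨t + 1, ht⟩) rfl m m').2 (by omega)
    show f (box w t m) ≤ f (box w _ m')
    rw [hb]
    exact hrow _ _ (hmem t m hm) (hb ▸ hmem _ m' hm')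
  · by_cases hq : q ∈ diagOf (Setting.A n) w
    · obtain ⟨t, m, hm, rfl⟩ := (mem_diagOf_iff hpar).1 hq
      rw [tabOf_box ps hm, downPos_pathOfDownPos (hd t) (hmono t) hm]
    · rw [tabOf_of_notMem hpar ps hq, hzero q hq]

end TypeA

open TypeA in
theorem stmt15_general (n : ℕ) {T : ℕ}
    (w : Fin T → ℕ × ℤ) (hw : IsSnake (Setting.A n) w) :
    ∃ Φ : (Fin T → List (ℝ × ℝ)) → (ℤ × ℤ → ℕ),
      Set.BijOn Φ (PBar (Setting.A n) w) (TabA n (diagOf (Setting.A n) w)) ∧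
      ∀ ps ∈ PBar (Setting.A n) w,
        tmon (Setting.A n) ps = MtabA n (diagOf (Setting.A n) w) (Φ ps) := by
  have hpar : ∀ t, (((w t).1 : ℤ) - (w t).2) % 2 = 1 := fun t => (hw.1 t).2.2
  exact ⟨tabOf w, ⟨tabOf_mapsTo hpar, tabOf_injOn, tabOf_surjOn hw⟩,
    fun ps hps => tmon_eq_MtabA hpar hps⟩

/-- type A: for a snake in type `A_N` with associated skew diagram `D`, there
is a bijection between the set `𝒫̄` of non-overlapping tuples of paths and the set of type A
skew tableaux of shape `D`, under which a tuple `(p_t)` corresponds to a tableau `𝒯` with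
`∏_t m(p_t) = M(𝒯)`. -/
theorem stmt15 (n : ℕ) (hn : 1 ≤ n) {T : ℕ} (hT : 1 ≤ T)
    (w : Fin T → ℕ × ℤ) (hw : IsSnake (Setting.A n) w) :
    ∃ Φ : (Fin T → List (ℝ × ℝ)) → (ℤ × ℤ → ℕ),
      Set.BijOn Φ (PBar (Setting.A n) w) (TabA n (diagOf (Setting.A n) w)) ∧
      ∀ ps ∈ PBar (Setting.A n) w,
        tmon (Setting.A n) ps = MtabA n (diagOf (Setting.A n) w) (Φ ps) :=
  stmt15_general n w hw

end Paper
end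

section
/- Let the setting be type A_N or type B_N, let (i_t,k_t), 1 ≤ t ≤ T, be a snake, let (p_1,…,p_T) ∈ P̄_{(i_t,k_t)}, and let (j,ℓ) ∈ W. Then at most one of the paths p_1,…,p_T can be lowered at (j,ℓ), and at most one of the paths p_1,…,p_T can be raised at (j,ℓ). -/
namespace Paper

lemma pt_mem {p : List (ℝ × ℝ)} {r : ℕ} (h : r < p.length) : pt p r ∈ p := by
  unfold pt
  rw [List.getD_eq_getElem _ _ h]
  exact List.getElem_mem h

/-- A canonical point contained in any path that can be lowered at `(j,l)`. -/
noncomputable def witLower (S : Setting) (j : ℕ) (l : ℤ) : ℝ × ℝ :=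
  match S with
  | .A _ => ((j : ℝ), ((l - 1 : ℤ) : ℝ))
  | .B n ε => if j = n then (2 * (n : ℝ) - 1, ((l - 1 : ℤ) : ℝ) - ε)
      else (((iotaB n (j, l - 2)).1 : ℝ), ((iotaB n (j, l - 2)).2 : ℝ))

lemma lower_mem {S : Setting} {i : ℕ} {k : ℤ} {j : ℕ} {l : ℤ} {p : List (ℝ × ℝ)}
    (hp : p ∈ P S i k) (h : CanLower S p j l) : witLower S j l ∈ p := by
  obtain ⟨h1, -⟩ := h
  cases S with
  | A n =>
    obtain ⟨hj1, hjn, hpt, -⟩ := h1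
    obtain ⟨hlen, -⟩ := hp
    have hjlt : j < p.length := by rw [hlen]; omega
    have hm := pt_mem hjlt
    rw [hpt] at hm
    simpa [witLower, rr] using hm
  | B n ε =>
    obtain ⟨-, hdisj⟩ := h1
    by_cases hjn : j = n
    · subst hjn
      rcases hdisj with ⟨r, -, -, -, -, hne1, -⟩ | ⟨-, hmem⟩
      · simp [iotaB] at hne1
      · rw [if_pos rfl] at hmem
        simpa [witLower, rr] using hmem.1
    · rcases hdisj with ⟨r, -, hrlt, hpt, -⟩ | ⟨hjn', -⟩
      · have hm := pt_mem (show r < p.length by omega)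
        rw [hpt] at hm
        simpa [witLower, rr, hjn, iotaB] using hm
      · exact absurd hjn' hjn

/-- A canonical point contained in any path that can be raised at `(j,l)`. -/
noncomputable def witRaise (S : Setting) (j : ℕ) (l : ℤ) : ℝ × ℝ :=
  match S with
  | .A _ => ((j : ℝ), (l : ℝ) + 1)
  | .B n ε => if j = n then (2 * (n : ℝ) - 1, (l : ℝ) + 1 + ε)
      else (((iotaB n (j, l - 2)).1 : ℝ), (l : ℝ) + 2)

lemma raise_mem {S : Setting} {i : ℕ} {k : ℤ} {j : ℕ} {l : ℤ} {p' p : List (ℝ × ℝ)}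
    (h : LoweredTo S i k j l p' p) : witRaise S j l ∈ p := by
  obtain ⟨-, -, -, hrep⟩ := h
  cases S with
  | A n =>
    obtain ⟨r, hr, -, hlen, hptr, -⟩ := hrep
    have hm := pt_mem (show r < p.length by rw [hlen]; exact hr)
    rw [hptr] at hm
    simpa [witRaise] using hm
  | B n ε =>
    dsimp only at hrep
    by_cases hjn : j = n
    · subst hjn
      rw [if_pos rfl] at hrep
      obtain ⟨r, hr, -, hlen, hptr, -⟩ := hrep
      have hm := pt_mem (show r < p.length by rw [hlen]; exact hr)
      rw [hptr] at hm
      simpa [witRaise] using hm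
    · rw [if_neg hjn] at hrep
      by_cases hjn1 : j = n - 1
      · rw [if_pos hjn1] at hrep
        obtain ⟨r, s, hr, hs, -, -, -, hlen, hptr, -⟩ := hrep
        have hm := pt_mem (show r < p.length by rw [hlen]; exact hr)
        rw [hptr] at hm
        simpa [witRaise, hjn] using hm
      · rw [if_neg hjn1] at hrep
        obtain ⟨r, hr, -, hlen, hptr, -⟩ := hrep
        have hm := pt_mem (show r < p.length by rw [hlen]; exact hr)
        rw [hptr] at hm
        simpa [witRaise, hjn] using hm

/-- for a non-overlapping tuple `(p_t) ∈ 𝒫̄` and `(j,ℓ) ∈ W`, at most one of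
the paths can be lowered at `(j,ℓ)`, and at most one of the paths can be raised at `(j,ℓ)`. -/
theorem stmt18 (S : Setting) (hS : S.valid) {T : ℕ} (hT : 1 ≤ T)
    (w : Fin T → ℕ × ℤ) (hw : IsSnake S w)
    (ps : Fin T → List (ℝ × ℝ)) (hps : ps ∈ PBar S w)
    (j : ℕ) (l : ℤ) (hjl : (j, l) ∈ W S) :
    (∀ s t : Fin T, CanLower S (ps s) j l → CanLower S (ps t) j l → s = t) ∧
    (∀ s t : Fin T, CanRaise S (w s).1 (w s).2 (ps s) j l →
      CanRaise S (w t).1 (w t).2 (ps t) j l → s = t) := by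
  obtain ⟨hpsP, hno⟩ := hps
  have key : ∀ (q : ℝ × ℝ) (s t : Fin T), q ∈ ps s → q ∈ ps t → s = t := by
    intro q s t hs ht
    by_contra hne
    rcases lt_or_gt_of_ne hne with h | h
    · exact lt_irrefl q.2 (hno s t h q hs q ht rfl)
    · exact lt_irrefl q.2 (hno t s h q ht q hs rfl)
  constructor
  · intro s t hs ht
    exact key _ s t (lower_mem (hpsP s) hs) (lower_mem (hpsP t) ht)
  · rintro s t ⟨ps', hs⟩ ⟨pt', ht⟩
    exact key _ s t (raise_mem hs) (raise_mem ht)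

end Paper
end

section
/- Let the setting be type A_N or type B_N, let (i_t,k_t), 1 ≤ t ≤ T, be a snake, let (p_1,…,p_T) ∈ P̄_{(i_t,k_t)}, and set m = ∏_{t=1}^T m(p_t) ∈ M. Then: (i) for every (i,ℓ) ∈ X the exponent u_{i,ℓ}(m) of the generator Y_{i,ℓ} in m lies in {−1, 0, 1}; and (ii) for every i ∈ I and every ℓ with (i,ℓ) ∈ X and (i,ℓ+2r_i) ∈ X, it is not the case that u_{i,ℓ}(m) = 1 and u_{i,ℓ+2r_i}(m) = −1. -/
namespace Paper

lemma mem_iff_exists_pt {q : ℝ × ℝ} {p : List (ℝ × ℝ)} :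
    q ∈ p ↔ ∃ r < p.length, pt p r = q := by
  rw [List.mem_iff_getElem]
  refine exists_congr fun r => ⟨fun ⟨h, hq⟩ => ⟨h, ?_⟩, fun ⟨h, hq⟩ => ⟨h, ?_⟩⟩ <;>
    rwa [pt, List.getD_eq_getElem _ _ h] at *

open Classical in
lemma tmon_apply (S : Setting) {T : ℕ} (ps : Fin T → List (ℝ × ℝ)) (x : ℕ × ℤ) :
    tmon S ps x = ((Finset.univ.filter fun t => x ∈ Cp S (ps t) true).card : ℤ) -
      (Finset.univ.filter fun t => x ∈ Cp S (ps t) false).card := by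
  simp [tmon, mon, ind, Finset.sum_sub_distrib, Finset.sum_boole]

noncomputable def cornerPt : Setting → ℕ × ℤ → Bool → ℝ × ℝ
  | .A _, x, _ => ((x.1 : ℝ), (x.2 : ℝ))
  | .B n ε, x, up =>
      if x.1 = n then (2 * (n : ℝ) - 1, (x.2 : ℝ) - if up then ε else -ε)
      else (((iotaB n x).1 : ℝ), ((iotaB n x).2 : ℝ))

lemma cornerPt_mem {S : Setting} {p : List (ℝ × ℝ)} {x : ℕ × ℤ} {up : Bool}
    (h : x ∈ Cp S p up) : cornerPt S x up ∈ p := by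
  cases S with
  | A n =>
    obtain ⟨hx1, -, hpt, -⟩ := h
    have hlen : x.1 < p.length := by
      by_contra hc
      have h0 := congrArg Prod.fst hpt
      rw [pt, List.getD_eq_default _ _ (by omega)] at h0
      have h0' : (x.1 : ℝ) = 0 := h0.symm
      have : x.1 = 0 := by exact_mod_cast h0'
      omega
    rw [cornerPt, ← hpt]
    exact pt_mem hlen
  | B n ε =>
    obtain ⟨-, ⟨r, hr1, hr2, hpt, -, hne, -⟩ | ⟨hxn, hmem⟩⟩ := h
    · have hxn : x.1 ≠ n := fun hxn => hne (by simp [iotaB, hxn])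
      rw [cornerPt, if_neg hxn, ← hpt]
      exact pt_mem (by omega)
    · rw [cornerPt, if_pos hxn]
      cases up <;> simpa [sub_neg_eq_add] using hmem.1

section NonOverlapping

variable {T : ℕ} {ps : Fin T → List (ℝ × ℝ)}

lemma NonOverlapping.eq_of_mem (hno : NonOverlapping ps) {q : ℝ × ℝ} {s t : Fin T}
    (hs : q ∈ ps s) (ht : q ∈ ps t) : s = t := by
  by_contra hne
  rcases lt_or_gt_of_ne hne with hst | hts
  · exact lt_irrefl _ (hno s t hst q hs q ht rfl)
  · exact lt_irrefl _ (hno t s hts q ht q hs rfl)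

lemma NonOverlapping.card_filter_mem_Cp_le_one (hno : NonOverlapping ps) (S : Setting)
    (x : ℕ × ℤ) (up : Bool) [DecidablePred fun t => x ∈ Cp S (ps t) up] :
    (Finset.univ.filter fun t => x ∈ Cp S (ps t) up).card ≤ 1 :=
  Finset.card_le_one.mpr fun _ hs _ ht =>
    hno.eq_of_mem (cornerPt_mem (Finset.mem_filter.mp hs).2)
      (cornerPt_mem (Finset.mem_filter.mp ht).2)

lemma NonOverlapping.tmon_mem (hno : NonOverlapping ps) (S : Setting) (x : ℕ × ℤ) :
    tmon S ps x = -1 ∨ tmon S ps x = 0 ∨ tmon S ps x = 1 := by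
  classical
  have hup := hno.card_filter_mem_Cp_le_one S x true
  have hlow := hno.card_filter_mem_Cp_le_one S x false
  rw [tmon_apply]
  omega

lemma NonOverlapping.mem_Cp_of_tmon_eq_one (hno : NonOverlapping ps) {S : Setting}
    {x : ℕ × ℤ} (hx : tmon S ps x = 1) :
    (∃ t, x ∈ Cp S (ps t) true) ∧ ∀ u, x ∉ Cp S (ps u) false := by
  classical
  have hup := hno.card_filter_mem_Cp_le_one S x true
  rw [tmon_apply] at hx
  obtain ⟨t, ht⟩ := Finset.card_pos.mp
    (show 0 < (Finset.univ.filter fun t => x ∈ Cp S (ps t) true).card by omega)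
  refine ⟨⟨t, (Finset.mem_filter.mp ht).2⟩, fun u hu => ?_⟩
  have hnone : (Finset.univ.filter fun t => x ∈ Cp S (ps t) false).card = 0 := by omega
  exact Finset.filter_eq_empty_iff.mp (Finset.card_eq_zero.mp hnone) (Finset.mem_univ u) hu

lemma NonOverlapping.mem_Cp_of_tmon_eq_neg_one (hno : NonOverlapping ps) {S : Setting}
    {x : ℕ × ℤ} (hx : tmon S ps x = -1) :
    (∃ s, x ∈ Cp S (ps s) false) ∧ ∀ u, x ∉ Cp S (ps u) true := by
  classical
  have hlow := hno.card_filter_mem_Cp_le_one S x false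
  rw [tmon_apply] at hx
  obtain ⟨s, hs⟩ := Finset.card_pos.mp
    (show 0 < (Finset.univ.filter fun t => x ∈ Cp S (ps t) false).card by omega)
  refine ⟨⟨s, (Finset.mem_filter.mp hs).2⟩, fun u hu => ?_⟩
  have hnone : (Finset.univ.filter fun t => x ∈ Cp S (ps t) true).card = 0 := by omega
  exact Finset.filter_eq_empty_iff.mp (Finset.card_eq_zero.mp hnone) (Finset.mem_univ u) hu

end NonOverlapping

lemma pathsA_mem_of_mem_Cp {n i : ℕ} {k : ℤ} {p : List (ℝ × ℝ)} (hp : p ∈ pathsA n i k)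
    {j : ℕ} {l : ℤ} {up : Bool} (h : (j, l) ∈ Cp (.A n) p up) :
    (((j - 1 : ℕ) : ℝ), (l : ℝ) + if up then 1 else -1) ∈ p := by
  obtain ⟨hj1, hjn, -, hprev, -⟩ := h
  obtain ⟨hlen, hx, -⟩ := hp
  have hpt : pt p (j - 1) = (((j - 1 : ℕ) : ℝ), (l : ℝ) + if up then 1 else -1) :=
    Prod.ext (hx _ (by omega)) hprev
  rw [← hpt]
  exact pt_mem (by omega)

lemma NonOverlapping.false_of_mem_Cp_A {n : ℕ} {T : ℕ} {w : Fin T → ℕ × ℤ}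
    {ps : Fin T → List (ℝ × ℝ)} (hno : NonOverlapping ps)
    (hP : ∀ t, ps t ∈ P (.A n) (w t).1 (w t).2) {j : ℕ} {l : ℤ} {t s : Fin T}
    (ht : (j, l) ∈ Cp (.A n) (ps t) true)
    (hs : (j, l + 2 * (rr (.A n) j : ℤ)) ∈ Cp (.A n) (ps s) false) : False := by
  have hmid_t := pathsA_mem_of_mem_Cp (hP t) ht
  have hmid_s := pathsA_mem_of_mem_Cp (hP s) hs
  simp only [rr, if_true, Bool.false_eq_true, if_false] at hmid_t hmid_s
  push_cast at hmid_s
  obtain rfl : s = t := hno.eq_of_mem (by convert hmid_s using 2; ring) hmid_t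
  have h := ht.2.2.1.symm.trans hs.2.2.1
  simp only [rr, Prod.mk.injEq, true_and] at h
  push_cast at h
  linarith

/-- The `x`-coordinate of the `r`-th point of a type `B` path: `o` tells whether the path
starts at `x = 0` (rather than at `x = 4N - 2`); the spin line `x = 2N - 1` is reached at
index `N`, and a composite path stays on it at index `N + 1`. -/
def pathX (n : ℕ) (o : Bool) (r : ℕ) : ℤ :=
  if r ≤ n - 1 then (if o then 2 * r else 4 * n - 2 - 2 * r)
  else if r ≤ n + 1 then 2 * n - 1
  else (if o then 2 * r - 4 else 4 * n + 2 - 2 * r)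

lemma pathX_eq_iff {n : ℕ} (hn : 1 ≤ n) (o : Bool) (r : ℕ) :
    pathX n o r = 2 * n - 1 ↔ n ≤ r ∧ r ≤ n + 1 := by
  unfold pathX
  cases o <;> split_ifs <;> omega

lemma pathX_injOn {n : ℕ} {o : Bool} {r r' : ℕ} (hr : r < 2 * n + 2) (hr' : r' < 2 * n + 2)
    (h : pathX n o r = pathX n o r') (hne : pathX n o r ≠ 2 * n - 1) : r = r' := by
  unfold pathX at h hne
  cases o <;> split_ifs at h hne <;> omega

def outward (n : ℕ) (x : ℤ) : ℤ := if x < 2 * n - 1 then x - 2 else x + 2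

lemma pathX_pred {n : ℕ} (o : Bool) {r : ℕ} (hr1 : 1 ≤ r) (hr : r ≤ n - 1) :
    pathX n o (r - 1) = outward n (pathX n o r) := by
  unfold pathX outward
  cases o <;> split_ifs <;> omega

lemma pathX_succ {n : ℕ} (o : Bool) {r : ℕ} (hr : n + 2 ≤ r) :
    pathX n o (r + 1) = outward n (pathX n o r) := by
  unfold pathX outward
  cases o <;> split_ifs <;> omega

lemma pathX_reflect {n : ℕ} (hn : 1 ≤ n) (o : Bool) {r : ℕ} (hr1 : n + 1 ≤ r)
    (hr2 : r ≤ 2 * n + 1) :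
    pathX n (!o) (2 * n + 1 - r) = pathX n o r := by
  unfold pathX
  cases o <;> simp only [Bool.not_false, Bool.not_true, Bool.false_eq_true, ↓reduceIte] <;>
    split_ifs <;> omega

lemma pathsBspin_fst {n : ℕ} {ε : ℝ} {l : ℤ} {p : List (ℝ × ℝ)} (hn : 1 ≤ n)
    (hp : p ∈ pathsBspin n ε l) {r : ℕ} (hr : r < n + 1) :
    (pt p r).1 = pathX n (decide (l % 4 = 3)) r := by
  obtain ⟨-, hx, hxn, -⟩ := hp
  rcases lt_or_eq_of_le (Nat.lt_succ_iff.mp hr) with hr | rfl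
  · by_cases h3 : l % 4 = 3
    · rw [if_pos h3] at hx
      rw [hx r hr, pathX, if_pos (by omega)]
      simp [h3]
    · rw [if_neg h3] at hx
      rw [hx r hr, pathX, if_pos (by omega)]
      simp [h3]
  · rw [hxn, pathX, if_neg (by omega), if_pos (by omega)]
    push_cast
    ring

lemma pathsBspin_snd_step {n : ℕ} {ε : ℝ} {l : ℤ} {p : List (ℝ × ℝ)}
    (hp : p ∈ pathsBspin n ε l) {r : ℕ} (hr : r + 2 ≤ n) :
    (pt p (r + 1)).2 = (pt p r).2 + 2 ∨ (pt p (r + 1)).2 = (pt p r).2 - 2 := by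
  rcases hp.2.2.2.2.1 r hr with h | h
  · exact Or.inl (by linarith)
  · exact Or.inr (by linarith)

/-- A path of `𝒫_{i,k}` with `i < N` is made of a component in `𝒫_{N, botIndex}`, which ends
lower on the spin line, and one in `𝒫_{N, topIndex}`, which ends higher; for `i = N` both
indices are `k`. -/
def botIndex (n i : ℕ) (k : ℤ) : ℤ := if i = n then k else k - (2 * n - 2 * i - 1)

def topIndex (n i : ℕ) (k : ℤ) : ℤ := if i = n then k else k + (2 * n - 2 * i - 1)

lemma pathsB_decomp {n : ℕ} {ε : ℝ} {i : ℕ} {k : ℤ} {p : List (ℝ × ℝ)} (hi : i ≠ n)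
    (hp : p ∈ pathsB n ε i k) :
    ∃ a b : List (ℝ × ℝ), a ∈ pathsBspin n ε (botIndex n i k) ∧
      b ∈ pathsBspin n ε (topIndex n i k) ∧ p.length = 2 * n + 2 ∧
      (∀ r ≤ n, pt p r = pt a r) ∧
      (∀ r, n + 1 ≤ r → r ≤ 2 * n + 1 → pt p r = pt b (2 * n + 1 - r)) ∧
      (pt b n).2 < (pt a n).2 := by
  rw [pathsB, if_neg hi] at hp
  obtain ⟨a, b, ha, hb, rfl, -, hab⟩ := hp
  have hal : a.length = n + 1 := ha.1
  have hbl : b.length = n + 1 := hb.1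
  refine ⟨a, b, by rwa [botIndex, if_neg hi], by rwa [topIndex, if_neg hi],
    by simp [hal, hbl]; omega, fun r hr => ?_, fun r hr1 hr2 => ?_, by linarith⟩
  · rw [pt, pt, List.getD_eq_getElem _ _ (by simp [hal, hbl]; omega),
      List.getElem_append_left (by omega), List.getD_eq_getElem _ _ (by omega)]
  · rw [pt, pt, List.getD_eq_getElem _ _ (by simp [hal, hbl]; omega),
      List.getElem_append_right (by omega), List.getElem_reverse,
      List.getD_eq_getElem _ _ (by omega)]
    congr 1
    omega

section PathsB

variable {n : ℕ} {ε : ℝ} {i : ℕ} {k : ℤ} {p : List (ℝ × ℝ)}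

lemma pathsB_length (hp : p ∈ pathsB n ε i k) :
    p.length = if i = n then n + 1 else 2 * n + 2 := by
  by_cases hi : i = n
  · rw [if_pos hi]
    rw [pathsB, if_pos hi] at hp
    exact hp.1
  · obtain ⟨-, -, -, -, hlen, -⟩ := pathsB_decomp hi hp
    rw [if_neg hi, hlen]

lemma pathsB_fst (hn : 1 ≤ n) (hik : (i, k) ∈ XB n) (hp : p ∈ pathsB n ε i k) :
    ∃ o, ∀ r < p.length, (pt p r).1 = pathX n o r := by
  by_cases hi : i = n
  · rw [pathsB, if_pos hi] at hp
    exact ⟨_, fun r hr => pathsBspin_fst hn hp (hp.1 ▸ hr)⟩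
  · obtain ⟨a, b, ha, hb, hlen, hpa, hpb, -⟩ := pathsB_decomp hi hp
    have hk : k % 2 = 0 := by rcases hik with ⟨h, -⟩ | ⟨-, -, h⟩ <;> omega
    have hab : decide (topIndex n i k % 4 = 3) = !decide (botIndex n i k % 4 = 3) := by
      simp only [topIndex, botIndex, if_neg hi]
      by_cases h3 : (k - (2 * n - 2 * i - 1)) % 4 = 3 <;> simp [h3] <;> omega
    refine ⟨decide (botIndex n i k % 4 = 3), fun r hr => ?_⟩
    rcases le_or_gt r n with hrn | hrn
    · rw [hpa r hrn, pathsBspin_fst hn ha (by omega)]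
    · rw [hpb r hrn (by omega), pathsBspin_fst hn hb (by omega), hab,
        pathX_reflect hn _ hrn (by omega)]

lemma pathsB_eq_of_fst_eq (hn : 1 ≤ n) (hik : (i, k) ∈ XB n) (hp : p ∈ pathsB n ε i k)
    {q q' : ℝ × ℝ} (hq : q ∈ p) (hq' : q' ∈ p) (hx : q.1 = q'.1)
    (hne : q.1 ≠ 2 * (n : ℝ) - 1) : q = q' := by
  obtain ⟨r, hr, rfl⟩ := mem_iff_exists_pt.mp hq
  obtain ⟨r', hr', rfl⟩ := mem_iff_exists_pt.mp hq'
  obtain ⟨o, ho⟩ := pathsB_fst hn hik hp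
  have hlen := pathsB_length hp
  rw [ho r hr, ho r' hr'] at hx
  rw [ho r hr] at hne
  have hne' : pathX n o r ≠ 2 * n - 1 := fun h => hne (by rw [h]; push_cast; ring)
  have hbound : p.length ≤ 2 * n + 2 := by split_ifs at hlen <;> omega
  obtain rfl : r = r' := pathX_injOn (by omega) (by omega) (by exact_mod_cast hx) hne'
  rfl

lemma pathsB_snd_step (hp : p ∈ pathsB n ε i k) {r : ℕ} (hr : r + 1 < p.length)
    (hoff : r + 1 < n ∨ n + 2 ≤ r) :
    (pt p (r + 1)).2 = (pt p r).2 + 2 ∨ (pt p (r + 1)).2 = (pt p r).2 - 2 := by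
  by_cases hi : i = n
  · have hlen := pathsB_length hp
    rw [if_pos hi] at hlen
    rw [pathsB, if_pos hi] at hp
    exact pathsBspin_snd_step hp (by omega)
  · obtain ⟨a, b, ha, hb, hlen, hpa, hpb, -⟩ := pathsB_decomp hi hp
    rcases hoff with hoff | hoff
    · rw [hpa r (by omega), hpa (r + 1) (by omega)]
      exact pathsBspin_snd_step ha (by omega)
    · rw [hpb r (by omega) (by omega), hpb (r + 1) (by omega) (by omega)]
      have hj : 2 * n + 1 - r = 2 * n + 1 - (r + 1) + 1 := by omega
      rw [hj]
      rcases pathsBspin_snd_step hb (r := 2 * n + 1 - (r + 1)) (by omega) with h | h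
      · exact Or.inr (by linarith)
      · exact Or.inl (by linarith)

lemma pathsB_exists_outward (hn : 1 ≤ n) (hik : (i, k) ∈ XB n) (hp : p ∈ pathsB n ε i k)
    {r : ℕ} (hr1 : 1 ≤ r) (hr2 : r + 1 < p.length) {x : ℤ} (hx : (pt p r).1 = x)
    (hne : x ≠ 2 * n - 1) :
    ∃ r', (r' = r - 1 ∨ r' = r + 1) ∧ r' < p.length ∧ (pt p r').1 = outward n x ∧
      ((pt p r').2 = (pt p r).2 + 2 ∨ (pt p r').2 = (pt p r).2 - 2) := by
  obtain ⟨o, ho⟩ := pathsB_fst hn hik hp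
  have hlen := pathsB_length hp
  have hxr : pathX n o r = x := by exact_mod_cast (ho r (by omega)).symm.trans hx
  have hoff : r ≤ n - 1 ∨ n + 2 ≤ r := by
    have := (pathX_eq_iff hn o r).not.mp (hxr ▸ hne)
    omega
  rcases hoff with hoff | hoff
  · refine ⟨r - 1, Or.inl rfl, by omega, ?_, ?_⟩
    · rw [ho _ (by omega), pathX_pred o hr1 hoff, hxr]
    · have e : r - 1 + 1 = r := by omega
      rcases pathsB_snd_step hp (r := r - 1) (by omega) (by omega) with h | h <;> rw [e] at h
      · exact Or.inr (by linarith)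
      · exact Or.inl (by linarith)
  · refine ⟨r + 1, Or.inr rfl, hr2, ?_, pathsB_snd_step hp hr2 (Or.inr hoff)⟩
    rw [ho _ hr2, pathX_succ o hoff, hxr]

end PathsB

lemma iotaB_snd (n : ℕ) (x : ℕ × ℤ) : (iotaB n x).2 = x.2 := by
  unfold iotaB
  split_ifs <;> rfl

lemma iotaB_fst_ne {n j : ℕ} (hj : j ≠ n) (l : ℤ) : (iotaB n (j, l)).1 ≠ 2 * n - 1 := by
  unfold iotaB
  split_ifs <;> simp only [ne_eq] <;> omega

lemma iotaB_fst_add_four {n j : ℕ} (hj : j ≠ n) (l : ℤ) :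
    (iotaB n (j, l + 4)).1 = (iotaB n (j, l)).1 := by
  unfold iotaB
  simp only [if_neg hj]
  split_ifs <;> first | rfl | omega

lemma pathsB_outward_mem_of_mem_Cp {n : ℕ} {ε : ℝ} {i : ℕ} {k : ℤ} {p : List (ℝ × ℝ)}
    (hn : 1 ≤ n) (hik : (i, k) ∈ XB n) (hp : p ∈ pathsB n ε i k) {j : ℕ} {l : ℤ} {up : Bool}
    (hj : j ≠ n) (h : (j, l) ∈ Cp (.B n ε) p up) :
    (((outward n (iotaB n (j, l)).1 : ℤ) : ℝ), (l : ℝ) + if up then 2 else -2) ∈ p := by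
  obtain ⟨-, ⟨r, hr1, hr2, hpt, -, -, -, hcorner⟩ | ⟨hjn, -⟩⟩ := h
  swap
  · exact absurd hjn hj
  rw [iotaB_snd] at hpt
  obtain ⟨r', hr', hr'len, hx, hy⟩ := pathsB_exists_outward hn hik hp hr1 hr2
    (congrArg Prod.fst hpt) (iotaB_fst_ne hj l)
  have hyr : (pt p r).2 = l := congrArg Prod.snd hpt
  have hpt' : pt p r' = (((outward n (iotaB n (j, l)).1 : ℤ) : ℝ),
      (l : ℝ) + if up then 2 else -2) := by
    refine Prod.ext hx ?_
    rcases hr' with rfl | rfl <;> cases up <;>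
      simp only [Bool.false_eq_true, ↓reduceIte] at hcorner ⊢ <;>
      rcases hy with hy | hy <;> linarith [hcorner.1, hcorner.2]
  rw [← hpt']
  exact pt_mem hr'len

lemma NonOverlapping.false_of_mem_Cp_B_off {n : ℕ} {ε : ℝ} {T : ℕ} {w : Fin T → ℕ × ℤ}
    {ps : Fin T → List (ℝ × ℝ)} (hno : NonOverlapping ps) (hn : 1 ≤ n)
    (hw : ∀ t, w t ∈ X (.B n ε)) (hP : ∀ t, ps t ∈ P (.B n ε) (w t).1 (w t).2)
    {j : ℕ} (hj : j ≠ n) {l : ℤ} {t s : Fin T} (ht : (j, l) ∈ Cp (.B n ε) (ps t) true)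
    (hs : (j, l + 2 * (rr (.B n ε) j : ℤ)) ∈ Cp (.B n ε) (ps s) false) : False := by
  have h4 : l + 2 * (rr (.B n ε) j : ℤ) = l + 4 := by simp [rr, hj]
  rw [h4] at hs
  have hout_t := pathsB_outward_mem_of_mem_Cp hn (hw t) (hP t) hj ht
  have hout_s := pathsB_outward_mem_of_mem_Cp hn (hw s) (hP s) hj hs
  rw [iotaB_fst_add_four hj] at hout_s
  have hmid : (((outward n (iotaB n (j, l)).1 : ℤ) : ℝ), (l : ℝ) + 2) ∈ ps s := by
    convert hout_s using 2
    push_cast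
    ring
  obtain rfl : s = t := hno.eq_of_mem hmid (by simpa using hout_t)
  have hcorner_t := cornerPt_mem ht
  have hcorner_s := cornerPt_mem hs
  simp only [cornerPt, if_neg hj, iotaB_snd, iotaB_fst_add_four hj] at hcorner_t hcorner_s
  have h := pathsB_eq_of_fst_eq hn (hw s) (hP s) hcorner_t hcorner_s rfl
    (fun h => iotaB_fst_ne hj l (by push_cast at h ⊢; exact_mod_cast h))
  simp only [Prod.mk.injEq, true_and] at h
  push_cast at h
  linarith

/-- The heights at which a path of `𝒫_{N,ℓ}` can end on the spin line. -/
def SpinValue (ε : ℝ) (ℓ : ℤ) (y : ℝ) : Prop :=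
  ∃ m : ℤ, y = ℓ + 4 * m - ε ∨ y = ℓ + 4 * m + 2 + ε

lemma pathsBspin_snd {n : ℕ} {ε : ℝ} {ℓ : ℤ} {p : List (ℝ × ℝ)}
    (hp : p ∈ pathsBspin n ε ℓ) {r : ℕ} (hr : r ≤ n - 1) :
    ∃ m : ℤ, (pt p r).2 = ℓ + 2 * n - 1 + 2 * r + 4 * m := by
  induction r with
  | zero => exact ⟨0, by rw [hp.2.2.2.1]; push_cast; ring⟩
  | succ r ih =>
    obtain ⟨m, hm⟩ := ih (by omega)
    rcases pathsBspin_snd_step hp (r := r) (by omega) with h | h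
    · exact ⟨m, by rw [h, hm]; push_cast; ring⟩
    · exact ⟨m - 1, by rw [h, hm]; push_cast; ring⟩

lemma spinValue_pathsBspin {n : ℕ} {ε : ℝ} {ℓ : ℤ} {p : List (ℝ × ℝ)} (hn : 1 ≤ n)
    (hp : p ∈ pathsBspin n ε ℓ) : SpinValue ε ℓ (pt p n).2 := by
  obtain ⟨m, hm⟩ := pathsBspin_snd hp (r := n - 1) le_rfl
  have hcast : ((n - 1 : ℕ) : ℝ) = n - 1 := by rw [Nat.cast_sub hn]; simp
  have hlast := hp.2.2.2.2.2
  rw [hm, hcast] at hlast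
  refine ⟨n - 1 + m, ?_⟩
  rcases hlast with h | h
  · exact Or.inr (by push_cast; linarith)
  · exact Or.inl (by push_cast; linarith)

section SpinValue

variable {ε : ℝ} {ℓ l : ℤ}

lemma intCast_ne_two_mul (hε : 0 < ε) (hε2 : ε < 1 / 2) (a : ℤ) : (a : ℝ) ≠ 2 * ε := by
  intro h
  have h0 : (0 : ℤ) < a := by exact_mod_cast (by linarith : (0 : ℝ) < a)
  have h1 : a < 1 := by exact_mod_cast (by linarith : (a : ℝ) < 1)
  omega

lemma SpinValue.emod_four_of_sub (hε : 0 < ε) (hε2 : ε < 1 / 2) (h : SpinValue ε ℓ (l - ε)) :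
    ℓ % 4 = l % 4 := by
  obtain ⟨m, h | h⟩ := h
  · have : l = ℓ + 4 * m := by exact_mod_cast (by linarith : (l : ℝ) = ℓ + 4 * m)
    omega
  · exact absurd (by push_cast; linarith) (intCast_ne_two_mul hε hε2 (l - ℓ - 4 * m - 2))

lemma SpinValue.emod_four_of_add (hε : 0 < ε) (hε2 : ε < 1 / 2)
    (h : SpinValue ε ℓ (l + 2 + ε)) : ℓ % 4 = l % 4 := by
  obtain ⟨m, h | h⟩ := h
  · exact absurd (by push_cast; linarith) (intCast_ne_two_mul hε hε2 (ℓ + 4 * m - l - 2))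
  · have : l = ℓ + 4 * m := by exact_mod_cast (by linarith : (l : ℝ) = ℓ + 4 * m)
    omega

lemma SpinValue.eq_of_mem_Ioo (hε2 : ε < 1 / 2) (hℓ : ℓ % 2 = 1)
    (hl : l % 2 = 1) {y : ℝ} (h : SpinValue ε ℓ y) (h1 : l - ε < y) (h2 : y < l + 2 + ε) :
    y = l + ε ∨ y = l + 2 - ε := by
  obtain ⟨m, rfl | rfl⟩ := h
  · have hlo : l < ℓ + 4 * m := by
      exact_mod_cast (by push_cast; linarith : (l : ℝ) < ((ℓ + 4 * m : ℤ) : ℝ))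
    have hhi : ℓ + 4 * m < l + 3 := by
      exact_mod_cast (by push_cast; linarith : ((ℓ + 4 * m : ℤ) : ℝ) < ((l + 3 : ℤ) : ℝ))
    have : ((ℓ + 4 * m : ℤ) : ℝ) = ((l + 2 : ℤ) : ℝ) := by congr 1; omega
    push_cast at this
    exact Or.inr (by linarith)
  · have hlo : l - 1 < ℓ + 4 * m + 2 := by
      exact_mod_cast (by push_cast; linarith : ((l - 1 : ℤ) : ℝ) < ((ℓ + 4 * m + 2 : ℤ) : ℝ))
    have hhi : ℓ + 4 * m + 2 < l + 2 := by
      exact_mod_cast (by push_cast; linarith : ((ℓ + 4 * m + 2 : ℤ) : ℝ) < ((l + 2 : ℤ) : ℝ))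
    have : ((ℓ + 4 * m + 2 : ℤ) : ℝ) = l := by congr 1; omega
    push_cast at this
    exact Or.inl (by linarith)

end SpinValue

lemma topIndex_emod_two {n i : ℕ} {k : ℤ} (hik : (i, k) ∈ XB n) : topIndex n i k % 2 = 1 := by
  unfold topIndex
  rcases hik with ⟨rfl, hk⟩ | ⟨-, hin, hk⟩
  · simpa
  · rw [if_neg (by omega)]
    omega

lemma botIndex_emod_two {n i : ℕ} {k : ℤ} (hik : (i, k) ∈ XB n) : botIndex n i k % 2 = 1 := by
  unfold botIndex
  rcases hik with ⟨rfl, hk⟩ | ⟨-, hin, hk⟩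
  · simpa
  · rw [if_neg (by omega)]
    omega

lemma topIndex_sub_botIndex_emod_four {n i : ℕ} (hi : i ≠ n) (k : ℤ) :
    (topIndex n i k - botIndex n i k) % 4 = 2 := by
  simp only [topIndex, botIndex, if_neg hi]
  omega

lemma SnakePos.topIndex_sub_botIndex_emod_four {n : ℕ} {ε : ℝ} {i i' : ℕ} {k k' : ℤ}
    (h : SnakePos (.B n ε) (i, k) (i', k')) (hik : (i, k) ∈ XB n) (hik' : (i', k') ∈ XB n) :
    (topIndex n i' k' - botIndex n i k) % 4 = 2 := by
  simp only [SnakePos] at h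
  unfold topIndex botIndex
  have hi : i ≤ n := by rcases hik with ⟨hin, -⟩ | ⟨-, hin, -⟩ <;> omega
  have hi' : i' ≤ n := by rcases hik' with ⟨hin, -⟩ | ⟨-, hin, -⟩ <;> omega
  rcases abs_cases ((i' : ℤ) - i) with ⟨habs, -⟩ | ⟨habs, -⟩ <;> rw [habs] at h <;>
    split_ifs at h ⊢ <;> omega

def spinPt (n : ℕ) (y : ℝ) : ℝ × ℝ := (2 * (n : ℝ) - 1, y)

section SpinCorners

variable {n : ℕ} {ε : ℝ} {p : List (ℝ × ℝ)} {l : ℤ}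

lemma mem_XB_spin_iff : ((n, l) ∈ XB n) ↔ l % 2 = 1 := by
  simp [XB]

lemma mem_Cp_B_spin_true_iff :
    (n, l) ∈ Cp (.B n ε) p true ↔ l % 2 = 1 ∧ spinPt n (l - ε) ∈ p ∧ spinPt n (l + ε) ∉ p := by
  refine ⟨?_, fun ⟨hl, h⟩ => ⟨mem_XB_spin_iff.mpr hl, Or.inr ⟨rfl, h⟩⟩⟩
  rintro ⟨hX, ⟨r, -, -, -, -, hne, -⟩ | ⟨-, h⟩⟩
  · exact absurd (by simp [iotaB]) hne
  · exact ⟨mem_XB_spin_iff.mp hX, h⟩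

lemma mem_Cp_B_spin_false_iff :
    (n, l) ∈ Cp (.B n ε) p false ↔ l % 2 = 1 ∧ spinPt n (l + ε) ∈ p ∧ spinPt n (l - ε) ∉ p := by
  refine ⟨?_, fun ⟨hl, h⟩ => ⟨mem_XB_spin_iff.mpr hl, Or.inr ⟨rfl, h⟩⟩⟩
  rintro ⟨hX, ⟨r, -, -, -, -, hne, -⟩ | ⟨-, h⟩⟩
  · exact absurd (by simp [iotaB]) hne
  · exact ⟨mem_XB_spin_iff.mp hX, h⟩

end SpinCorners

section SpinLine

variable {n : ℕ} {ε : ℝ} {i : ℕ} {k : ℤ} {p : List (ℝ × ℝ)}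

lemma pathsB_mem_spinPt_iff (hn : 1 ≤ n) (hik : (i, k) ∈ XB n) (hp : p ∈ pathsB n ε i k)
    {y : ℝ} : spinPt n y ∈ p ↔ ∃ r, n ≤ r ∧ r ≤ n + 1 ∧ r < p.length ∧ (pt p r).2 = y := by
  obtain ⟨o, ho⟩ := pathsB_fst hn hik hp
  have hspin : ∀ r < p.length, (pt p r).1 = 2 * n - 1 ↔ n ≤ r ∧ r ≤ n + 1 := fun r hr => by
    rw [ho r hr, ← pathX_eq_iff hn o r]
    constructor <;> intro h
    · exact_mod_cast (by rw [h]; push_cast; ring : ((pathX n o r : ℤ) : ℝ) = ((2 * n - 1 : ℤ) : ℝ))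
    · rw [h]; push_cast; ring
  rw [mem_iff_exists_pt]
  constructor
  · rintro ⟨r, hr, hpt⟩
    obtain ⟨h1, h2⟩ := (hspin r hr).mp (congrArg Prod.fst hpt)
    exact ⟨r, h1, h2, hr, congrArg Prod.snd hpt⟩
  · rintro ⟨r, h1, h2, hr, hy⟩
    exact ⟨r, hr, Prod.ext ((hspin r hr).mpr ⟨h1, h2⟩) hy⟩

lemma pathsB_spin_points (hn : 1 ≤ n) (hik : (i, k) ∈ XB n) (hp : p ∈ pathsB n ε i k) :
    ∃ yt yb : ℝ, yt ≤ yb ∧ (i = n → yt = yb) ∧ spinPt n yt ∈ p ∧ spinPt n yb ∈ p ∧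
      (∀ y, spinPt n y ∈ p → y = yt ∨ y = yb) ∧
      SpinValue ε (topIndex n i k) yt ∧ SpinValue ε (botIndex n i k) yb := by
  have hlen := pathsB_length hp
  have hmem := fun y => pathsB_mem_spinPt_iff (y := y) hn hik hp
  by_cases hi : i = n
  · rw [if_pos hi] at hlen
    rw [pathsB, if_pos hi] at hp
    have hmem_n : spinPt n (pt p n).2 ∈ p := (hmem _).mpr ⟨n, le_rfl, by omega, by omega, rfl⟩
    have hval : SpinValue ε k (pt p n).2 := spinValue_pathsBspin hn hp
    refine ⟨_, _, le_rfl, fun _ => rfl, hmem_n, hmem_n, fun y hy => ?_,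
      by rwa [topIndex, if_pos hi], by rwa [botIndex, if_pos hi]⟩
    obtain ⟨r, h1, -, hr, rfl⟩ := (hmem y).mp hy
    obtain rfl : r = n := by omega
    exact Or.inl rfl
  · obtain ⟨a, b, ha, hb, hlen, hpa, hpb, hba⟩ := pathsB_decomp hi hp
    have hb_n : pt p (n + 1) = pt b n := by
      rw [hpb (n + 1) (by omega) (by omega)]
      congr 1
      omega
    refine ⟨(pt b n).2, (pt a n).2, hba.le, fun h => absurd h hi,
      (hmem _).mpr ⟨n + 1, by omega, le_rfl, by omega, by rw [hb_n]⟩,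
      (hmem _).mpr ⟨n, le_rfl, by omega, by omega, by rw [hpa n le_rfl]⟩, fun y hy => ?_,
      spinValue_pathsBspin hn hb, spinValue_pathsBspin hn ha⟩
    obtain ⟨r, h1, h2, -, rfl⟩ := (hmem y).mp hy
    rcases (by omega : r = n ∨ r = n + 1) with rfl | rfl
    · exact Or.inr (by rw [hpa r le_rfl])
    · exact Or.inl (by rw [hb_n])

variable (hε : 0 < ε) (hε2 : ε < 1 / 2) (hn : 1 ≤ n) (hik : (i, k) ∈ XB n)
  (hp : p ∈ pathsB n ε i k) {l : ℤ}
include hε2 hn hik hp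

lemma pathsB_spin_eq_of_mem_Ioo (hl : l % 2 = 1) {y : ℝ} (hy : spinPt n y ∈ p)
    (h1 : l - ε < y) (h2 : y < l + 2 + ε) : y = l + ε ∨ y = l + 2 - ε := by
  obtain ⟨yt, yb, -, -, -, -, hall, ht, hb⟩ := pathsB_spin_points (ε := ε) hn hik hp
  rcases hall y hy with rfl | rfl
  · exact ht.eq_of_mem_Ioo hε2 (topIndex_emod_two hik) hl h1 h2
  · exact hb.eq_of_mem_Ioo hε2 (botIndex_emod_two hik) hl h1 h2

lemma pathsB_spin_gap (hl : l % 2 = 1) (hlow : (n, l) ∉ Cp (.B n ε) p false)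
    (hup : (n, l + 2) ∉ Cp (.B n ε) p true) {y : ℝ} (hy : spinPt n y ∈ p) (h1 : l - ε < y)
    (h2 : y < l + 2 + ε) :
    (y = l + ε ∧ spinPt n (l - ε) ∈ p) ∨ (y = l + 2 - ε ∧ spinPt n (l + 2 + ε) ∈ p) := by
  rcases pathsB_spin_eq_of_mem_Ioo hε2 hn hik hp hl hy h1 h2 with rfl | rfl
  · refine Or.inl ⟨rfl, ?_⟩
    by_contra h
    exact hlow (mem_Cp_B_spin_false_iff.mpr ⟨hl, hy, h⟩)
  · refine Or.inr ⟨rfl, ?_⟩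
    by_contra h
    exact hup (mem_Cp_B_spin_true_iff.mpr ⟨by omega, by push_cast; exact hy, by push_cast; exact h⟩)

include hε

lemma pathsB_botIndex_emod_four (hA : spinPt n (l - ε) ∈ p)
    (hmax : ∀ y, spinPt n y ∈ p → y ≤ l - ε) : botIndex n i k % 4 = l % 4 := by
  obtain ⟨yt, yb, hle, -, -, hyb, hall, -, hb⟩ := pathsB_spin_points (ε := ε) hn hik hp
  have : yb = l - ε := by
    refine le_antisymm (hmax yb hyb) ?_
    rcases hall _ hA with h | h <;> linarith
  exact (this ▸ hb).emod_four_of_sub hε hε2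

lemma pathsB_topIndex_emod_four (hD : spinPt n (l + 2 + ε) ∈ p)
    (hmin : ∀ y, spinPt n y ∈ p → l + 2 + ε ≤ y) : topIndex n i k % 4 = l % 4 := by
  obtain ⟨yt, yb, hle, -, hyt, -, hall, ht, -⟩ := pathsB_spin_points (ε := ε) hn hik hp
  have : yt = l + 2 + ε := by
    refine le_antisymm ?_ (hmin yt hyt)
    rcases hall _ hD with h | h <;> linarith
  exact (this ▸ ht).emod_four_of_add hε hε2

lemma pathsB_not_mem_spinPt_sub_and_add (hA : spinPt n (l - ε) ∈ p)
    (hD : spinPt n (l + 2 + ε) ∈ p) : False := by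
  obtain ⟨yt, yb, hle, hsame, -, -, hall, ht, hb⟩ := pathsB_spin_points (ε := ε) hn hik hp
  have hA' := hall _ hA
  have hD' := hall _ hD
  obtain ⟨rfl, rfl⟩ : yt = l - ε ∧ yb = l + 2 + ε := by
    constructor <;> rcases hA' with h | h <;> rcases hD' with h' | h' <;> linarith
  have hi : i ≠ n := fun hi => by linarith [hsame hi]
  have := topIndex_sub_botIndex_emod_four hi k
  have := ht.emod_four_of_sub hε hε2
  have := hb.emod_four_of_add hε hε2
  omega

end SpinLine

lemma NonOverlapping.false_of_mem_Cp_B_spin {n : ℕ} {ε : ℝ} {T : ℕ} {w : Fin T → ℕ × ℤ}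
    {ps : Fin T → List (ℝ × ℝ)} (hno : NonOverlapping ps) (hε : 0 < ε) (hε2 : ε < 1 / 2)
    (hn : 1 ≤ n) (hw : IsSnake (.B n ε) w) (hP : ∀ t, ps t ∈ P (.B n ε) (w t).1 (w t).2)
    {l : ℤ} {t s : Fin T} (ht : (n, l) ∈ Cp (.B n ε) (ps t) true)
    (hs : (n, l + 2 * (rr (.B n ε) n : ℤ)) ∈ Cp (.B n ε) (ps s) false)
    (hlow : ∀ u, (n, l) ∉ Cp (.B n ε) (ps u) false)
    (hup : ∀ u, (n, l + 2 * (rr (.B n ε) n : ℤ)) ∉ Cp (.B n ε) (ps u) true) : False := by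
  have h2 : l + 2 * (rr (.B n ε) n : ℤ) = l + 2 := by simp [rr]
  rw [h2] at hs hup
  obtain ⟨hl, hA, hA'⟩ := mem_Cp_B_spin_true_iff.mp ht
  obtain ⟨-, hD, hD'⟩ := mem_Cp_B_spin_false_iff.mp hs
  push_cast at hD hD'
  have hord : ∀ {u v : Fin T}, u < v → ∀ {y y' : ℝ}, spinPt n y ∈ ps u → spinPt n y' ∈ ps v →
      y < y' := fun huv _ _ hy hy' => hno _ _ huv _ hy _ hy' rfl
  have hgap : ∀ u y, spinPt n y ∈ ps u → l - ε < y → y < l + 2 + ε → False := by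
    intro u y hy h1 h2
    rcases pathsB_spin_gap hε2 hn (hw.1 u) (hP u) hl (hlow u) (hup u) hy h1 h2 with
      ⟨rfl, hA_u⟩ | ⟨rfl, hD_u⟩
    · obtain rfl := hno.eq_of_mem hA hA_u
      exact hA' hy
    · obtain rfl := hno.eq_of_mem hD hD_u
      exact hD' hy
  rcases lt_trichotomy t s with hts | rfl | hst
  · have hsucc : (s : ℕ) = t + 1 := by
      by_contra hne
      have hts' : (t : ℕ) < s := hts
      set u : Fin T := ⟨t + 1, by omega⟩
      obtain ⟨y, -, -, -, hy, -⟩ := pathsB_spin_points (ε := ε) hn (hw.1 u) (hP u)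
      exact hgap u y hy (hord (show t < u by simp [Fin.lt_def, u]) hA hy)
        (hord (show u < s by simp [Fin.lt_def, u]; omega) hy hD)
    have hbot := pathsB_botIndex_emod_four hε hε2 hn (hw.1 t) (hP t) hA
      fun y hy => le_of_not_gt fun h => hgap t y hy h (hord hts hy hD)
    have htop := pathsB_topIndex_emod_four hε hε2 hn (hw.1 s) (hP s) hD
      fun y hy => le_of_not_gt fun h => hgap s y hy (hord hts hA hy) h
    have hsnake := hw.2 t (by omega)
    rw [show (⟨t + 1, _⟩ : Fin T) = s from Fin.ext hsucc.symm] at hsnake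
    have := hsnake.topIndex_sub_botIndex_emod_four (hw.1 t) (hw.1 s)
    omega
  · exact pathsB_not_mem_spinPt_sub_and_add hε hε2 hn (hw.1 t) (hP t) hA hD
  · linarith [hord hst hD hA]

theorem stmt19_general (S : Setting) (hS : S.valid) {T : ℕ}
    (w : Fin T → ℕ × ℤ) (hw : IsSnake S w)
    (ps : Fin T → List (ℝ × ℝ)) (hps : ps ∈ PBar S w) :
    (∀ i : ℕ, ∀ l : ℤ, (i, l) ∈ X S →
      tmon S ps (i, l) = -1 ∨ tmon S ps (i, l) = 0 ∨ tmon S ps (i, l) = 1) ∧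
    (∀ i : ℕ, ∀ l : ℤ, (i, l) ∈ X S → (i, l + 2 * (rr S i : ℤ)) ∈ X S →
      ¬(tmon S ps (i, l) = 1 ∧ tmon S ps (i, l + 2 * (rr S i : ℤ)) = -1)) := by
  obtain ⟨hP, hno⟩ := hps
  refine ⟨fun i l _ => hno.tmon_mem S (i, l), ?_⟩
  rintro i l - - ⟨hup, hlow⟩
  obtain ⟨⟨t, ht⟩, hnot⟩ := hno.mem_Cp_of_tmon_eq_one hup
  obtain ⟨⟨s, hs⟩, hnos⟩ := hno.mem_Cp_of_tmon_eq_neg_one hlow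
  cases S with
  | A n => exact hno.false_of_mem_Cp_A hP ht hs
  | B n ε =>
    obtain ⟨hn, hε, hε2⟩ := hS
    by_cases hi : i = n
    · subst hi
      exact hno.false_of_mem_Cp_B_spin hε hε2 (by omega) hw hP ht hs hnot hnos
    · exact hno.false_of_mem_Cp_B_off (by omega) hw.1 hP hi ht hs

/-- for `(p_t) ∈ 𝒫̄` with `m = ∏ m(p_t)`: (i) every exponent `u_{i,ℓ}(m)`,
`(i,ℓ) ∈ X`, lies in `{-1,0,1}`; (ii) for no `(i,ℓ)` with `(i,ℓ), (i,ℓ+2r_i) ∈ X` do we have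
`u_{i,ℓ}(m) = 1` and `u_{i,ℓ+2r_i}(m) = -1`. -/
theorem stmt19 (S : Setting) (hS : S.valid) {T : ℕ} (hT : 1 ≤ T)
    (w : Fin T → ℕ × ℤ) (hw : IsSnake S w)
    (ps : Fin T → List (ℝ × ℝ)) (hps : ps ∈ PBar S w) :
    (∀ i : ℕ, ∀ l : ℤ, (i, l) ∈ X S →
      tmon S ps (i, l) = -1 ∨ tmon S ps (i, l) = 0 ∨ tmon S ps (i, l) = 1) ∧
    (∀ i : ℕ, ∀ l : ℤ, (i, l) ∈ X S → (i, l + 2 * (rr S i : ℤ)) ∈ X S →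
      ¬(tmon S ps (i, l) = 1 ∧ tmon S ps (i, l + 2 * (rr S i : ℤ)) = -1)) :=
  stmt19_general S hS w hw ps hps

end Paper
end
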